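/- arXiv:1705.03981 — 3 statements merged into one kernel-verified Lean document; each statement's English description precedes it below -/
import Mathlib

section
/- Let G=(V,E) be a locally finite connected graph with symmetric weights and uniformly positive measure, λ>1, and a:V→[0,∞) satisfy (A₂): a(x)→∞ as d(x,x₀)→∞ for some fixed x₀. If {u_k} is bounded in E_λ (‖u‖²_{E_λ}=∫_V(|∇u|²+(λa+1)u²)dμ) and u_k⇀u weakly in E_λ, then u_k→u strongly in L^q(V) for every 2≤q≤∞. -/
/-!
Put `v k = u k - u₀`. Testing the weak convergence against the indicator of a vertex `z` shows
`(μ (-Δ + λ a + 1) v k) z → 0`. The `v k` are bounded in `E_λ`, hence in `ℓ²`, so they lie in a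
compact subset of `ℝ^V` (product topology); every cluster point `g` is in `ℓ²` and solves
`μ (-Δ + λ a + 1) g = 0`, so `g = 0` by the maximum principle, i.e. `v k → 0` pointwise.
Since `a → ∞` outside the finite balls `{d ≤ R}`, the `E_λ` bound makes the tails of
`∑ μ (v k)²` uniformly small, so `∑ μ (v k)² → 0`. As `μ ≥ μ_min`, this controls `‖v k‖_∞`,
and `∑ μ |v k|^q ≤ ‖v k‖_∞^(q-2) ∑ μ (v k)²`.
-/

open Filter Topology Real

noncomputable section

/-- Gradient form Γ(u,v)(x) on a locally finite graph. -/
def graphGamma {V : Type*} (nbr : V → Finset V) (w : V → V → ℝ) (mu : V → ℝ)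
    (u v : V → ℝ) (x : V) : ℝ :=
  (1 / (2 * mu x)) * ∑ y ∈ nbr x, w x y * ((u y - u x) * (v y - v x))

/-- Integrand of the E_λ inner product. -/
def eInner {V : Type*} (nbr : V → Finset V) (w : V → V → ℝ) (mu a : V → ℝ)
    (lam : ℝ) (u v : V → ℝ) (x : V) : ℝ :=
  mu x * (graphGamma nbr w mu u v x + (lam * a x + 1) * (u x * v x))

section

variable {V : Type*}

lemma tendsto_cofinite_atTop_of_finite_balls {a : V → ℝ} {d : V → ℕ}
    (hballs : ∀ R : ℕ, {x : V | d x ≤ R}.Finite)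
    (hainf : ∀ C : ℝ, ∃ R : ℕ, ∀ x, R < d x → C ≤ a x) : Tendsto a cofinite atTop := by
  refine tendsto_atTop.mpr fun C => eventually_cofinite.mpr ?_
  obtain ⟨R, hR⟩ := hainf C
  exact (hballs R).subset fun x hx => not_lt.mp fun hRx => hx (hR x hRx)

lemma exists_tsum_compl_le_of_tendsto_weight {f : ℕ → V → ℝ} {ρ : V → ℝ} {D : ℝ}
    (hf0 : ∀ k x, 0 ≤ f k x) (hf : ∀ k, Summable (f k)) (hρ0 : ∀ x, 0 ≤ ρ x)
    (hρ : Tendsto ρ cofinite atTop) (hρf : ∀ k, Summable fun x => ρ x * f k x)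
    (hD : ∀ k, ∑' x, ρ x * f k x ≤ D) {ε : ℝ} (hε : 0 < ε) :
    ∃ s : Finset V, ∀ k, ∑' x : {x // x ∉ s}, f k x ≤ ε := by
  set A := max (D / ε) 1
  have hA : 0 < A := zero_lt_one.trans_le (le_max_right _ _)
  have hfin := eventually_cofinite.mp (hρ.eventually_ge_atTop A)
  refine ⟨hfin.toFinset, fun k => ?_⟩
  have hAρ : ∀ x : {x // x ∉ hfin.toFinset}, A * f k x ≤ ρ x * f k x := fun x =>
    mul_le_mul_of_nonneg_right (not_not.mp fun h => x.2 (hfin.mem_toFinset.mpr h)) (hf0 k x)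
  have hsum : A * ∑' x : {x // x ∉ hfin.toFinset}, f k x ≤ A * ε :=
    calc A * ∑' x : {x // x ∉ hfin.toFinset}, f k x
        = ∑' x : {x // x ∉ hfin.toFinset}, A * f k x := tsum_mul_left.symm
      _ ≤ ∑' x : {x // x ∉ hfin.toFinset}, ρ x * f k x :=
          (((hf k).subtype _).mul_left A).tsum_le_tsum hAρ ((hρf k).subtype _)
      _ ≤ ∑' x, ρ x * f k x :=
          (hρf k).tsum_subtype_le _ _ fun x => mul_nonneg (hρ0 x) (hf0 k x)
      _ ≤ A * ε := (hD k).trans ((div_le_iff₀ hε).mp (le_max_left _ _))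
  exact le_of_mul_le_mul_left hsum hA

lemma tendsto_tsum_zero_of_tendsto_of_tsum_compl_le {f : ℕ → V → ℝ} (hf0 : ∀ k x, 0 ≤ f k x)
    (hf : ∀ k, Summable (f k)) (hlim : ∀ x, Tendsto (fun k => f k x) atTop (𝓝 0))
    (htail : ∀ ε > 0, ∃ s : Finset V, ∀ k, ∑' x : {x // x ∉ s}, f k x ≤ ε) :
    Tendsto (fun k => ∑' x, f k x) atTop (𝓝 0) := by
  refine tendsto_order.mpr ⟨fun b hb => .of_forall fun k => hb.trans_le (tsum_nonneg (hf0 k)),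
    fun ε hε => ?_⟩
  obtain ⟨s, hs⟩ := htail (ε / 2) (half_pos hε)
  have hhead : Tendsto (fun k => ∑ x ∈ s, f k x) atTop (𝓝 0) := by
    simpa using tendsto_finsetSum s fun x _ => hlim x
  filter_upwards [hhead.eventually (gt_mem_nhds (half_pos hε))] with k hk
  rw [← (hf k).sum_add_tsum_subtype_compl s]
  linarith [hs k]

lemma tendsto_cofinite_zero_of_sum_sq_le {g : V → ℝ} {D : ℝ}
    (hg : ∀ s : Finset V, ∑ x ∈ s, g x ^ 2 ≤ D) : Tendsto g cofinite (𝓝 0) := by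
  have hsq := (summable_of_sum_le (fun x => sq_nonneg (g x)) hg).tendsto_cofinite_zero
  rw [tendsto_zero_iff_abs_tendsto_zero]
  simpa [Function.comp_def, Real.sqrt_sq_eq_abs] using hsq.sqrt

lemma abs_le_sqrt_tsum_div {mu f : V → ℝ} {m : ℝ} (hm : 0 < m) (hmu : ∀ x, m ≤ mu x)
    (hf : Summable fun x => mu x * f x ^ 2) (x : V) :
    |f x| ≤ √((∑' y, mu y * f y ^ 2) / m) := by
  refine Real.abs_le_sqrt ((le_div_iff₀ hm).mpr ?_)
  calc f x ^ 2 * m ≤ mu x * f x ^ 2 := by nlinarith [hmu x, sq_nonneg (f x)]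
    _ ≤ ∑' y, mu y * f y ^ 2 :=
        hf.le_tsum x fun y _ => mul_nonneg (hm.le.trans (hmu y)) (sq_nonneg _)

lemma abs_rpow_le_rpow_mul_sq {t B q : ℝ} (ht : |t| ≤ B) (hq : 2 ≤ q) :
    |t| ^ q ≤ B ^ (q - 2) * t ^ 2 := by
  have hsplit : |t| ^ q = |t| ^ (q - 2) * |t| ^ (2 : ℝ) := by
    rw [← Real.rpow_add' (abs_nonneg t) (by linarith), sub_add_cancel]
  rw [hsplit, Real.rpow_two, sq_abs]
  exact mul_le_mul_of_nonneg_right (Real.rpow_le_rpow (abs_nonneg t) ht (by linarith))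
    (sq_nonneg t)

lemma tsum_mul_abs_rpow_le {mu f : V → ℝ} {B q : ℝ} (hmu : ∀ x, 0 ≤ mu x) (hB : ∀ x, |f x| ≤ B)
    (hq : 2 ≤ q) (hf : Summable fun x => mu x * f x ^ 2) :
    ∑' x, mu x * |f x| ^ q ≤ B ^ (q - 2) * ∑' x, mu x * f x ^ 2 := by
  have hle : ∀ x, mu x * |f x| ^ q ≤ B ^ (q - 2) * (mu x * f x ^ 2) := fun x => by
    rw [mul_left_comm]
    exact mul_le_mul_of_nonneg_left (abs_rpow_le_rpow_mul_sq (hB x) hq) (hmu x)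
  rw [← tsum_mul_left]
  exact (Summable.of_nonneg_of_le (fun x => mul_nonneg (hmu x) (by positivity)) hle
    (hf.mul_left _)).tsum_le_tsum hle (hf.mul_left _)

lemma tendsto_tsum_mul_abs_rpow_of_tendsto_tsum_mul_sq {mu : V → ℝ} {f : ℕ → V → ℝ} {m q : ℝ}
    (hm : 0 < m) (hmu : ∀ x, m ≤ mu x) (hf : ∀ k, Summable fun x => mu x * f k x ^ 2)
    (hL2 : Tendsto (fun k => ∑' x, mu x * f k x ^ 2) atTop (𝓝 0)) (hq : 2 ≤ q) :
    Tendsto (fun k => ∑' x, mu x * |f k x| ^ q) atTop (𝓝 0) := by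
  have hmu0 : ∀ x, 0 ≤ mu x := fun x => hm.le.trans (hmu x)
  obtain ⟨S, hS⟩ := hL2.bddAbove_range
  have hB : ∀ k x, |f k x| ≤ √(S / m) := fun k x =>
    (abs_le_sqrt_tsum_div hm hmu (hf k) x).trans <|
      Real.sqrt_le_sqrt <| div_le_div_of_nonneg_right (hS ⟨k, rfl⟩) hm.le
  refine squeeze_zero (fun k => tsum_nonneg fun x => mul_nonneg (hmu0 x) (by positivity))
    (fun k => tsum_mul_abs_rpow_le hmu0 (hB k) hq (hf k)) ?_
  simpa using hL2.const_mul (√(S / m) ^ (q - 2))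

lemma tendsto_iSup_abs_of_tendsto_tsum_mul_sq {mu : V → ℝ} {f : ℕ → V → ℝ} {m : ℝ}
    (hm : 0 < m) (hmu : ∀ x, m ≤ mu x) (hf : ∀ k, Summable fun x => mu x * f k x ^ 2)
    (hL2 : Tendsto (fun k => ∑' x, mu x * f k x ^ 2) atTop (𝓝 0)) :
    Tendsto (fun k => ⨆ x, |f k x|) atTop (𝓝 0) := by
  refine squeeze_zero (fun k => Real.iSup_nonneg fun x => abs_nonneg _)
    (fun k => Real.iSup_le (abs_le_sqrt_tsum_div hm hmu (hf k)) (Real.sqrt_nonneg _)) ?_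
  simpa using (hL2.div_const m).sqrt

end

/-- The operator `μ (-Δ + λ a + 1)`; `schrodingerOp f z` is the `E_λ`-pairing of `f` with the
indicator of `z`. -/
def schrodingerOp {V : Type*} (nbr : V → Finset V) (w : V → V → ℝ) (mu a : V → ℝ) (lam : ℝ)
    (f : V → ℝ) (z : V) : ℝ :=
  ∑ y ∈ nbr z, w z y * (f z - f y) + mu z * ((lam * a z + 1) * f z)

section

variable {V : Type*} {nbr : V → Finset V} {w : V → V → ℝ} {mu a : V → ℝ} {lam : ℝ}

lemma schrodingerOp_sub (f g : V → ℝ) (z : V) :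
    schrodingerOp nbr w mu a lam (f - g) z =
      schrodingerOp nbr w mu a lam f z - schrodingerOp nbr w mu a lam g z := by
  simp only [schrodingerOp, Pi.sub_apply, sub_sub_sub_comm, mul_sub, Finset.sum_sub_distrib]
  ring

lemma continuous_schrodingerOp_apply (z : V) :
    Continuous fun f : V → ℝ => schrodingerOp nbr w mu a lam f z := by
  unfold schrodingerOp
  fun_prop

/-- At a maximum of `|h|` every gradient term `h z * (h z - h y)` is nonnegative, so
`h z * schrodingerOp h z ≥ μ (λ a + 1) (h z)²`. -/
lemma eq_zero_at_max_of_schrodingerOp_eq_zero {h : V → ℝ} {z : V}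
    (hw : ∀ y ∈ nbr z, 0 ≤ w z y) (hpos : 0 < mu z * (lam * a z + 1))
    (hmax : ∀ y, |h y| ≤ |h z|) (hop : schrodingerOp nbr w mu a lam h z = 0) : h z = 0 := by
  have hgrad : 0 ≤ ∑ y ∈ nbr z, w z y * (h z * (h z - h y)) :=
    Finset.sum_nonneg fun y hy => mul_nonneg (hw y hy) <| by
      nlinarith [le_abs_self (h z * h y), abs_mul (h z) (h y), sq_abs (h z),
        mul_le_mul_of_nonneg_left (hmax y) (abs_nonneg (h z))]
  have hsplit : h z * schrodingerOp nbr w mu a lam h z =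
      ∑ y ∈ nbr z, w z y * (h z * (h z - h y)) + mu z * (lam * a z + 1) * h z ^ 2 := by
    rw [schrodingerOp, mul_add, Finset.mul_sum]
    simp only [mul_left_comm (h z)]
    ring
  rw [hop, mul_zero] at hsplit
  have hnonpos : mu z * (lam * a z + 1) * h z ^ 2 ≤ 0 := by linarith
  exact pow_eq_zero_iff two_ne_zero |>.mp <|
    le_antisymm ((mul_nonpos_iff_pos_imp_nonpos.mp hnonpos).1 hpos) (sq_nonneg _)

lemma eq_zero_of_schrodingerOp_eq_zero {h : V → ℝ} (hw : ∀ x, ∀ y ∈ nbr x, 0 ≤ w x y)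
    (hpos : ∀ x, 0 < mu x * (lam * a x + 1)) (hh : Tendsto h cofinite (𝓝 0))
    (hop : ∀ z, schrodingerOp nbr w mu a lam h z = 0) : h = 0 := by
  funext x
  by_contra hx
  have hε : 0 < |h x| := abs_pos.mpr hx
  have hfin : {y | |h x| ≤ |h y|}.Finite := by
    simpa [Real.dist_eq, Filter.eventually_cofinite] using Metric.tendsto_nhds.mp hh _ hε
  obtain ⟨z, hzT, hzmax⟩ := Set.exists_max_image _ (fun y => |h y|) hfin ⟨x, le_refl |h x|⟩
  have hmax : ∀ y, |h y| ≤ |h z| := fun y =>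
    (le_or_gt |h x| |h y|).elim (hzmax y) fun hy => hy.le.trans hzT
  have hz := eq_zero_at_max_of_schrodingerOp_eq_zero (hw z) (hpos z) hmax (hop z)
  simp only [Set.mem_ofPred_eq, hz, abs_zero] at hzT
  exact hε.not_ge hzT

lemma mu_mul_graphGamma_self_nonneg (f : V → ℝ) {x : V} (hw : ∀ y ∈ nbr x, 0 ≤ w x y)
    (hmu : 0 ≤ mu x) : 0 ≤ mu x * graphGamma nbr w mu f f x :=
  mul_nonneg hmu <| mul_nonneg (div_nonneg zero_le_one (mul_nonneg zero_le_two hmu)) <|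
    Finset.sum_nonneg fun y hy => mul_nonneg (hw y hy) (mul_self_nonneg _)

lemma potential_mul_sq_le_eInner_self (f : V → ℝ) {x : V} (hw : ∀ y ∈ nbr x, 0 ≤ w x y)
    (hmu : 0 ≤ mu x) : (lam * a x + 1) * (mu x * f x ^ 2) ≤ eInner nbr w mu a lam f f x := by
  have := mu_mul_graphGamma_self_nonneg f hw hmu
  rw [eInner, mul_add, sq]
  linarith

lemma mu_mul_sq_le_eInner_self (f : V → ℝ) {x : V} (hw : ∀ y ∈ nbr x, 0 ≤ w x y)
    (hmu : 0 ≤ mu x) (ha : 0 ≤ lam * a x) : mu x * f x ^ 2 ≤ eInner nbr w mu a lam f f x :=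
  (le_mul_of_one_le_left (mul_nonneg hmu (sq_nonneg _)) (by linarith)).trans
    (potential_mul_sq_le_eInner_self f hw hmu)

lemma eInner_self_nonneg (f : V → ℝ) {x : V} (hw : ∀ y ∈ nbr x, 0 ≤ w x y) (hmu : 0 ≤ mu x)
    (hpot : 0 ≤ lam * a x + 1) : 0 ≤ eInner nbr w mu a lam f f x :=
  (mul_nonneg hpot (mul_nonneg hmu (sq_nonneg _))).trans
    (potential_mul_sq_le_eInner_self f hw hmu)

lemma eInner_add_self_add_eInner_sub_self (f g : V → ℝ) (x : V) :
    eInner nbr w mu a lam (f + g) (f + g) x + eInner nbr w mu a lam (f - g) (f - g) x =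
      2 * eInner nbr w mu a lam f f x + 2 * eInner nbr w mu a lam g g x := by
  have hgrad : ∑ y ∈ nbr x, w x y * ((f y + g y - (f x + g x)) * (f y + g y - (f x + g x))) +
      ∑ y ∈ nbr x, w x y * ((f y - g y - (f x - g x)) * (f y - g y - (f x - g x))) =
      2 * ∑ y ∈ nbr x, w x y * ((f y - f x) * (f y - f x)) +
        2 * ∑ y ∈ nbr x, w x y * ((g y - g x) * (g y - g x)) := by
    rw [← Finset.sum_add_distrib, Finset.mul_sum, Finset.mul_sum, ← Finset.sum_add_distrib]
    exact Finset.sum_congr rfl fun y _ => by ring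
  simp only [eInner, graphGamma, Pi.add_apply, Pi.sub_apply]
  linear_combination (mu x * (1 / (2 * mu x))) * hgrad

lemma eInner_sub_self_le (f g : V → ℝ) {x : V} (hw : ∀ y ∈ nbr x, 0 ≤ w x y) (hmu : 0 ≤ mu x)
    (hpot : 0 ≤ lam * a x + 1) :
    eInner nbr w mu a lam (f - g) (f - g) x ≤
      2 * eInner nbr w mu a lam f f x + 2 * eInner nbr w mu a lam g g x := by
  rw [← eInner_add_self_add_eInner_sub_self]
  linarith [eInner_self_nonneg (f + g) hw hmu hpot]

lemma summable_eInner_sub_self {f g : V → ℝ} (hw : ∀ x, ∀ y ∈ nbr x, 0 ≤ w x y)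
    (hmu : ∀ x, 0 ≤ mu x) (hpot : ∀ x, 0 ≤ lam * a x + 1)
    (hf : Summable (eInner nbr w mu a lam f f)) (hg : Summable (eInner nbr w mu a lam g g)) :
    Summable (eInner nbr w mu a lam (f - g) (f - g)) :=
  .of_nonneg_of_le (fun x => eInner_self_nonneg _ (hw x) (hmu x) (hpot x))
    (fun x => eInner_sub_self_le f g (hw x) (hmu x) (hpot x)) ((hf.mul_left 2).add (hg.mul_left 2))

lemma tsum_eInner_sub_self_le {f g : V → ℝ} (hw : ∀ x, ∀ y ∈ nbr x, 0 ≤ w x y)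
    (hmu : ∀ x, 0 ≤ mu x) (hpot : ∀ x, 0 ≤ lam * a x + 1)
    (hf : Summable (eInner nbr w mu a lam f f)) (hg : Summable (eInner nbr w mu a lam g g)) :
    ∑' x, eInner nbr w mu a lam (f - g) (f - g) x ≤
      2 * ∑' x, eInner nbr w mu a lam f f x + 2 * ∑' x, eInner nbr w mu a lam g g x := by
  rw [← tsum_mul_left, ← tsum_mul_left, ← (hf.mul_left 2).tsum_add (hg.mul_left 2)]
  exact (summable_eInner_sub_self hw hmu hpot hf hg).tsum_le_tsum
    (fun x => eInner_sub_self_le f g (hw x) (hmu x) (hpot x)) ((hf.mul_left 2).add (hg.mul_left 2))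

lemma summable_mu_mul_sq_of_summable_eInner_self {f : V → ℝ} (hw : ∀ x, ∀ y ∈ nbr x, 0 ≤ w x y)
    (hmu : ∀ x, 0 ≤ mu x) (ha : ∀ x, 0 ≤ lam * a x) (hf : Summable (eInner nbr w mu a lam f f)) :
    Summable fun x => mu x * f x ^ 2 :=
  .of_nonneg_of_le (fun x => mul_nonneg (hmu x) (sq_nonneg _))
    (fun x => mu_mul_sq_le_eInner_self f (hw x) (hmu x) (ha x)) hf

lemma sum_sq_le_of_tsum_eInner_self_le {f : V → ℝ} {m D : ℝ} (hw : ∀ x, ∀ y ∈ nbr x, 0 ≤ w x y)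
    (hm : 0 < m) (hmu : ∀ x, m ≤ mu x) (ha : ∀ x, 0 ≤ lam * a x)
    (hf : Summable (eInner nbr w mu a lam f f)) (hD : ∑' x, eInner nbr w mu a lam f f x ≤ D)
    (s : Finset V) : ∑ x ∈ s, f x ^ 2 ≤ D / m := by
  have hmu0 : ∀ x, 0 ≤ mu x := fun x => hm.le.trans (hmu x)
  rw [le_div_iff₀ hm, Finset.sum_mul]
  calc ∑ x ∈ s, f x ^ 2 * m ≤ ∑ x ∈ s, eInner nbr w mu a lam f f x :=
        Finset.sum_le_sum fun x _ => (mul_comm _ _).trans_le <|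
          (mul_le_mul_of_nonneg_right (hmu x) (sq_nonneg _)).trans
            (mu_mul_sq_le_eInner_self f (hw x) (hmu0 x) (ha x))
    _ ≤ D := (hf.sum_le_tsum s fun x _ =>
        eInner_self_nonneg f (hw x) (hmu0 x) (by linarith [ha x])).trans hD

end

section

variable {V : Type*} [DecidableEq V] {nbr : V → Finset V} {w : V → V → ℝ} {mu a : V → ℝ}
  {lam : ℝ}

lemma eInner_single_eq_zero (hsym : ∀ x y, y ∈ nbr x ↔ x ∈ nbr y) (f : V → ℝ) {x z : V}
    (hxz : x ≠ z) (hx : x ∉ nbr z) : eInner nbr w mu a lam f (Pi.single z 1) x = 0 := by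
  set δ : V → ℝ := Pi.single z 1
  have hzx : z ∉ nbr x := fun h => hx ((hsym x z).mp h)
  have hδ : ∀ y, y ≠ z → δ y = 0 := fun y hy => Pi.single_eq_of_ne hy 1
  have hgrad : ∑ y ∈ nbr x, w x y * ((f y - f x) * (δ y - δ x)) = 0 :=
    Finset.sum_eq_zero fun y hy => by
      rw [hδ x hxz, hδ y (ne_of_mem_of_not_mem hy hzx)]
      ring
  rw [eInner, graphGamma, hgrad, hδ x hxz]
  ring

lemma summable_eInner_single (hsym : ∀ x y, y ∈ nbr x ↔ x ∈ nbr y) (f : V → ℝ) (z : V) :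
    Summable (eInner nbr w mu a lam f (Pi.single z 1)) :=
  summable_of_ne_finset_zero (s := insert z (nbr z)) fun _ hx => by
    rw [Finset.mem_insert, not_or] at hx
    exact eInner_single_eq_zero hsym f hx.1 hx.2

lemma eInner_single_eq (hmu : ∀ x, mu x ≠ 0) (f : V → ℝ) (z x : V) :
    eInner nbr w mu a lam f (Pi.single z 1) x =
      (1 / 2) * ((if z ∈ nbr x then w x z * (f z - f x) else 0) -
        (Pi.single z 1 : V → ℝ) x * ∑ y ∈ nbr x, w x y * (f y - f x)) +
      (Pi.single z 1 : V → ℝ) x * (mu x * ((lam * a x + 1) * f x)) := by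
  set δ : V → ℝ := Pi.single z 1
  have hin : ∑ y ∈ nbr x, w x y * (f y - f x) * δ y =
      if z ∈ nbr x then w x z * (f z - f x) else 0 := by
    simp only [δ, Pi.single_apply, mul_ite, mul_one, mul_zero, Finset.sum_ite_eq']
  have hgrad : ∑ y ∈ nbr x, w x y * ((f y - f x) * (δ y - δ x)) =
      ∑ y ∈ nbr x, w x y * (f y - f x) * δ y - δ x * ∑ y ∈ nbr x, w x y * (f y - f x) := by
    rw [Finset.mul_sum, ← Finset.sum_sub_distrib]
    exact Finset.sum_congr rfl fun y _ => by ring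
  rw [eInner, graphGamma, hgrad, hin]
  field_simp [hmu x]

lemma tsum_eInner_single (hsym : ∀ x y, y ∈ nbr x ↔ x ∈ nbr y) (hwsym : ∀ x y, w x y = w y x)
    (hmu : ∀ x, mu x ≠ 0) (f : V → ℝ) (z : V) :
    ∑' x, eInner nbr w mu a lam f (Pi.single z 1) x = schrodingerOp nbr w mu a lam f z := by
  set s := insert z (nbr z)
  rw [tsum_eq_sum (s := s) fun x hx => by
    rw [Finset.mem_insert, not_or] at hx
    exact eInner_single_eq_zero hsym f hx.1 hx.2]
  have hzs : z ∈ s := Finset.mem_insert_self z _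
  have hfilter : s.filter (fun x => z ∈ nbr x) = nbr z := by
    ext x
    simp only [s, Finset.mem_filter, Finset.mem_insert, ← hsym z x]
    exact and_iff_right_of_imp Or.inr
  rw [Finset.sum_congr rfl fun x _ => eInner_single_eq hmu f z x]
  simp only [Finset.sum_add_distrib, ← Finset.mul_sum, Finset.sum_sub_distrib,
    Pi.single_apply, ite_mul, one_mul, zero_mul, Finset.sum_ite_eq', if_pos hzs,
    ← Finset.sum_filter, hfilter]
  have hin : ∑ x ∈ nbr z, w x z * (f z - f x) = ∑ y ∈ nbr z, w z y * (f z - f y) :=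
    Finset.sum_congr rfl fun x _ => by rw [hwsym]
  have hout : ∑ y ∈ nbr z, w z y * (f y - f z) = -∑ y ∈ nbr z, w z y * (f z - f y) := by
    rw [← Finset.sum_neg_distrib]
    exact Finset.sum_congr rfl fun y _ => by ring
  rw [hin, hout, schrodingerOp]
  ring

end

lemma tendsto_schrodingerOp_sub_of_weak {V : Type*} {nbr : V → Finset V} {w : V → V → ℝ}
    {mu a : V → ℝ} {lam : ℝ} (hsym : ∀ x y, y ∈ nbr x ↔ x ∈ nbr y)
    (hwsym : ∀ x y, w x y = w y x) (hmu : ∀ x, mu x ≠ 0) {u : ℕ → V → ℝ} {u₀ : V → ℝ}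
    (hweak : ∀ v : V → ℝ, Summable (eInner nbr w mu a lam v v) →
      Tendsto (fun k => ∑' x, eInner nbr w mu a lam (u k) v x) atTop
        (𝓝 (∑' x, eInner nbr w mu a lam u₀ v x))) (z : V) :
    Tendsto (fun k => schrodingerOp nbr w mu a lam (u k - u₀) z) atTop (𝓝 0) := by
  classical
  have h := (hweak _ (summable_eInner_single hsym _ z)).sub_const
    (schrodingerOp nbr w mu a lam u₀ z)
  simp only [tsum_eInner_single hsym hwsym hmu, sub_self] at h
  simpa only [schrodingerOp_sub] using h

lemma tendsto_nhds_zero_of_tendsto_schrodingerOp {V : Type*} {nbr : V → Finset V}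
    {w : V → V → ℝ} {mu a : V → ℝ} {lam D : ℝ} {v : ℕ → V → ℝ}
    (hw : ∀ x, ∀ y ∈ nbr x, 0 ≤ w x y) (hpos : ∀ x, 0 < mu x * (lam * a x + 1))
    (hbdd : ∀ k (s : Finset V), ∑ x ∈ s, v k x ^ 2 ≤ D)
    (hop : ∀ z, Tendsto (fun k => schrodingerOp nbr w mu a lam (v k) z) atTop (𝓝 0)) :
    Tendsto v atTop (𝓝 0) := by
  set K := {g : V → ℝ | ∀ s : Finset V, ∑ x ∈ s, g x ^ 2 ≤ D}
  have hKclosed : IsClosed K := by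
    simp only [K, Set.ofPred_forall]
    exact isClosed_iInter fun s => isClosed_le (by fun_prop) continuous_const
  have hKcube : K ⊆ Set.univ.pi fun _ => Set.Icc (-√D) √D := fun g hg x _ =>
    abs_le.mp (Real.abs_le_sqrt (by simpa using hg {x}))
  have hKcompact : IsCompact K :=
    (isCompact_univ_pi fun _ => isCompact_Icc).of_isClosed_subset hKclosed hKcube
  refine hKcompact.tendsto_nhds_of_unique_mapClusterPt (.of_forall hbdd) fun g hgK hg => ?_
  refine eq_zero_of_schrodingerOp_eq_zero hw hpos (tendsto_cofinite_zero_of_sum_sq_le hgK)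
    fun z => eq_of_nhds_neBot ?_
  exact (ClusterPt.mono (hg.tendsto_comp (continuous_schrodingerOp_apply z).continuousAt)
    (hop z)).neBot

lemma tendsto_tsum_mu_mul_sq_of_tendsto_apply {V : Type*} {nbr : V → Finset V}
    {w : V → V → ℝ} {mu a : V → ℝ} {lam D : ℝ} {v : ℕ → V → ℝ}
    (hw : ∀ x, ∀ y ∈ nbr x, 0 ≤ w x y) (hmu : ∀ x, 0 ≤ mu x) (ha : ∀ x, 0 ≤ lam * a x)
    (hρ : Tendsto (fun x => lam * a x + 1) cofinite atTop)
    (hvE : ∀ k, Summable (eInner nbr w mu a lam (v k) (v k)))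
    (hvD : ∀ k, ∑' x, eInner nbr w mu a lam (v k) (v k) x ≤ D)
    (hv : ∀ x, Tendsto (fun k => v k x) atTop (𝓝 0)) :
    Tendsto (fun k => ∑' x, mu x * v k x ^ 2) atTop (𝓝 0) := by
  have hpot : ∀ x, 0 ≤ lam * a x + 1 := fun x => by linarith [ha x]
  have hf0 : ∀ k x, 0 ≤ mu x * v k x ^ 2 := fun k x => mul_nonneg (hmu x) (sq_nonneg _)
  have hvL2 : ∀ k, Summable fun x => mu x * v k x ^ 2 := fun k =>
    summable_mu_mul_sq_of_summable_eInner_self hw hmu ha (hvE k)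
  have hρle : ∀ k x, (lam * a x + 1) * (mu x * v k x ^ 2) ≤
      eInner nbr w mu a lam (v k) (v k) x := fun k x =>
    potential_mul_sq_le_eInner_self _ (hw x) (hmu x)
  have hρL2 : ∀ k, Summable fun x => (lam * a x + 1) * (mu x * v k x ^ 2) := fun k =>
    .of_nonneg_of_le (fun x => mul_nonneg (hpot x) (hf0 k x)) (hρle k) (hvE k)
  refine tendsto_tsum_zero_of_tendsto_of_tsum_compl_le hf0 hvL2
    (fun x => by simpa using ((hv x).pow 2).const_mul (mu x)) fun ε hε => ?_
  exact exists_tsum_compl_le_of_tendsto_weight hf0 hvL2 hpot hρ hρL2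
    (fun k => ((hρL2 k).tsum_le_tsum (hρle k) (hvE k)).trans (hvD k)) hε

theorem Elambda_compact_embedding_general {V : Type*}
    (nbr : V → Finset V) (w : V → V → ℝ) (mu a : V → ℝ)
    (hsym : ∀ x y, y ∈ nbr x ↔ x ∈ nbr y)
    (hwpos : ∀ x y, y ∈ nbr x → 0 < w x y)
    (hwsym : ∀ x y, w x y = w y x)
    (mumin : ℝ) (hmin : 0 < mumin) (hmu : ∀ x, mumin ≤ mu x)
    (d : V → ℕ)
    (hballs : ∀ R : ℕ, {x : V | d x ≤ R}.Finite)
    (ha0 : ∀ x, 0 ≤ a x)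
    (hainf : ∀ C : ℝ, ∃ R : ℕ, ∀ x, R < d x → C ≤ a x)
    (lam : ℝ) (hlam : 1 < lam)
    (u : ℕ → V → ℝ) (u₀ : V → ℝ)
    (hmem : ∀ k, Summable (eInner nbr w mu a lam (u k) (u k)))
    (hmem0 : Summable (eInner nbr w mu a lam u₀ u₀))
    (hbdd : ∃ C : ℝ, ∀ k, ∑' x, eInner nbr w mu a lam (u k) (u k) x ≤ C)
    (hweak : ∀ v : V → ℝ, Summable (eInner nbr w mu a lam v v) →
      Tendsto (fun k => ∑' x, eInner nbr w mu a lam (u k) v x) atTop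
        (𝓝 (∑' x, eInner nbr w mu a lam u₀ v x))) :
    (∀ q : ℝ, 2 ≤ q →
        Tendsto (fun k => ∑' x, mu x * |u k x - u₀ x| ^ q) atTop (𝓝 0)) ∧
    Tendsto (fun k => ⨆ x, |u k x - u₀ x|) atTop (𝓝 0) := by
  obtain ⟨C, hC⟩ := hbdd
  have hmupos : ∀ x, 0 < mu x := fun x => hmin.trans_le (hmu x)
  have hmu0 : ∀ x, 0 ≤ mu x := fun x => (hmupos x).le
  have hw : ∀ x, ∀ y ∈ nbr x, 0 ≤ w x y := fun x y hy => (hwpos x y hy).le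
  have ha : ∀ x, 0 ≤ lam * a x := fun x => mul_nonneg (by linarith) (ha0 x)
  have hpot : ∀ x, 0 ≤ lam * a x + 1 := fun x => by linarith [ha x]
  have hvE : ∀ k, Summable (eInner nbr w mu a lam (u k - u₀) (u k - u₀)) := fun k =>
    summable_eInner_sub_self hw hmu0 hpot (hmem k) hmem0
  have hvD : ∀ k, ∑' x, eInner nbr w mu a lam (u k - u₀) (u k - u₀) x ≤
      2 * C + 2 * ∑' x, eInner nbr w mu a lam u₀ u₀ x := fun k =>
    (tsum_eInner_sub_self_le hw hmu0 hpot (hmem k) hmem0).trans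
      (by linarith [hC k])
  have hptwise : ∀ x, Tendsto (fun k => (u k - u₀) x) atTop (𝓝 0) :=
    tendsto_pi_nhds.mp <| tendsto_nhds_zero_of_tendsto_schrodingerOp hw
      (fun x => mul_pos (hmupos x) (by linarith [ha x]))
      (fun k => sum_sq_le_of_tsum_eInner_self_le hw hmin hmu ha (hvE k) (hvD k))
      (tendsto_schrodingerOp_sub_of_weak hsym hwsym (fun x => (hmupos x).ne') hweak)
  have hρ : Tendsto (fun x => lam * a x + 1) cofinite atTop :=
    tendsto_atTop_add_const_right _ 1 <|
      (tendsto_cofinite_atTop_of_finite_balls hballs hainf).const_mul_atTop (by linarith)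
  have hL2 := tendsto_tsum_mu_mul_sq_of_tendsto_apply hw hmu0 ha hρ hvE hvD
    hptwise
  have hvL2 : ∀ k, Summable fun x => mu x * (u k - u₀) x ^ 2 := fun k =>
    summable_mu_mul_sq_of_summable_eInner_self hw hmu0 ha (hvE k)
  exact ⟨fun q hq => tendsto_tsum_mul_abs_rpow_of_tendsto_tsum_mul_sq hmin hmu hvL2 hL2 hq,
    tendsto_iSup_abs_of_tendsto_tsum_mul_sq hmin hmu hvL2 hL2⟩

/-- Compactness: if {u_k} is bounded in E_λ and u_k ⇀ u weakly in E_λ, then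
u_k → u strongly in L^q(V) for every 2 ≤ q ≤ ∞ (the L^∞ case is the last
conjunct). -/
theorem Elambda_compact_embedding {V : Type*}
    (nbr : V → Finset V) (w : V → V → ℝ) (mu a : V → ℝ)
    (hsym : ∀ x y, y ∈ nbr x ↔ x ∈ nbr y)
    (hconn : ∀ x y : V, Relation.ReflTransGen (fun s t => t ∈ nbr s) x y)
    (hwpos : ∀ x y, y ∈ nbr x → 0 < w x y)
    (hwsym : ∀ x y, w x y = w y x)
    (mumin : ℝ) (hmin : 0 < mumin) (hmu : ∀ x, mumin ≤ mu x)
    (x₀ : V) (d : V → ℕ)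
    (hballs : ∀ R : ℕ, {x : V | d x ≤ R}.Finite)
    (ha0 : ∀ x, 0 ≤ a x)
    (hainf : ∀ C : ℝ, ∃ R : ℕ, ∀ x, R < d x → C ≤ a x)
    (lam : ℝ) (hlam : 1 < lam)
    (u : ℕ → V → ℝ) (u₀ : V → ℝ)
    (hmem : ∀ k, Summable (eInner nbr w mu a lam (u k) (u k)))
    (hmem0 : Summable (eInner nbr w mu a lam u₀ u₀))
    (hbdd : ∃ C : ℝ, ∀ k, ∑' x, eInner nbr w mu a lam (u k) (u k) x ≤ C)
    (hweak : ∀ v : V → ℝ, Summable (eInner nbr w mu a lam v v) →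
      Tendsto (fun k => ∑' x, eInner nbr w mu a lam (u k) v x) atTop
        (𝓝 (∑' x, eInner nbr w mu a lam u₀ v x))) :
    (∀ q : ℝ, 2 ≤ q →
        Tendsto (fun k => ∑' x, mu x * |u k x - u₀ x| ^ q) atTop (𝓝 0)) ∧
    Tendsto (fun k => ⨆ x, |u k x - u₀ x|) atTop (𝓝 0) :=
  Elambda_compact_embedding_general nbr w mu a hsym hwpos hwsym mumin hmin hmu d hballs ha0 hainf
    lam hlam u u₀ hmem hmem0 hbdd hweak
end
end

section
/- Let G be a finite (or the Dirichlet problem on a finite domain Ω of a locally finite) connected graph with symmetric positive weights and positive measure, and p≥2. Then the functional J_Ω(u) = (1/2)(∫_{Ω∪∂Ω}|∇u|²dμ + ∫_Ω u²dμ) − (1/(p+1))∫_Ω |u|^{p+1}dμ attains its infimum m_Ω on the Nehari manifold N_Ω = {u∈W₀^{1,2}(Ω)\{0} : ‖u‖²_{W₀^{1,2}(Ω)} = ‖u‖_{L^{p+1}(Ω)}^{p+1}}, and any minimizer is a (pointwise) solution of −Δu + u = |u|^{p−1}u in Ω with u=0 on ∂Ω. -/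
open Filter Topology Real

noncomputable section

/-- The μ-Laplacian Δu(x) on a locally finite graph. -/
def graphLap {V : Type*} (nbr : V → Finset V) (w : V → V → ℝ) (mu : V → ℝ)
    (u : V → ℝ) (x : V) : ℝ :=
  (1 / mu x) * ∑ y ∈ nbr x, w x y * (u y - u x)

/-- Squared W₀^{1,2}(Ω) norm: ∫_{Ω∪∂Ω}|∇u|²dμ + ∫_Ω u²dμ. -/
def w0NormSq {V : Type*} [DecidableEq V] (nbr : V → Finset V) (w : V → V → ℝ)
    (mu : V → ℝ) (Ω : Finset V) (u : V → ℝ) : ℝ :=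
  ∑ x ∈ Ω ∪ (Ω.biUnion nbr \ Ω), mu x * graphGamma nbr w mu u u x
    + ∑ x ∈ Ω, mu x * u x ^ 2

/-- The Dirichlet energy functional J_Ω. -/
def JOmega {V : Type*} [DecidableEq V] (nbr : V → Finset V) (w : V → V → ℝ)
    (mu : V → ℝ) (Ω : Finset V) (p : ℝ) (u : V → ℝ) : ℝ :=
  (1 / 2) * w0NormSq nbr w mu Ω u - (1 / (p + 1)) * ∑ x ∈ Ω, mu x * |u x| ^ (p + 1)

/-- The Nehari manifold N_Ω of the Dirichlet problem. -/
def nehariOmega {V : Type*} [DecidableEq V] (nbr : V → Finset V) (w : V → V → ℝ)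
    (mu : V → ℝ) (Ω : Finset V) (p : ℝ) (u : V → ℝ) : Prop :=
  u ≠ 0 ∧ (∀ x, x ∉ Ω → u x = 0) ∧
    w0NormSq nbr w mu Ω u = ∑ x ∈ Ω, mu x * |u x| ^ (p + 1)

/-! Restricted to functions vanishing outside `Ω`, everything is finite-dimensional. On the
Nehari manifold `J = (1/2 - 1/(p+1)) ‖u‖²`, so minimizing `J` there is the same as minimizing
the scale-invariant quotient `‖u‖^(2(p+1)) / (∫ |u|^(p+1))²`, which equals `‖u‖^(2(p-1))` on
the Nehari manifold. By scale invariance, the minimum of the quotient over all nonzero functions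
vanishing outside `Ω` is its minimum over a compact "unit sphere", hence attained, and rescaling
the minimizer onto the Nehari manifold gives a ground state. Conversely a ground state minimizes
the quotient among all such functions, so the derivative of the quotient along `u + s • δ_x`
vanishes at `s = 0`: this is the equation at `x`.
-/

namespace GraphDirichlet

open Finset Filter Topology

section Gradient

variable {V : Type*} {nbr : V → Finset V} {w : V → V → ℝ} {mu : V → ℝ}

lemma mu_mul_graphGamma {x : V} (hx : mu x ≠ 0) (u v : V → ℝ) :
    mu x * graphGamma nbr w mu u v x
      = (∑ y ∈ nbr x, w x y * ((u y - u x) * (v y - v x))) / 2 := by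
  unfold graphGamma
  field_simp

lemma mu_mul_graphLap {x : V} (hx : mu x ≠ 0) (u : V → ℝ) :
    mu x * graphLap nbr w mu u x = ∑ y ∈ nbr x, w x y * (u y - u x) := by
  unfold graphLap
  field_simp

lemma mu_mul_graphGamma_self_nonneg (hw : ∀ x y, y ∈ nbr x → 0 ≤ w x y) {x : V}
    (hx : mu x ≠ 0) (u : V → ℝ) : 0 ≤ mu x * graphGamma nbr w mu u u x := by
  rw [mu_mul_graphGamma hx]
  exact div_nonneg (sum_nonneg fun y hy => mul_nonneg (hw x y hy) (mul_self_nonneg _))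
    zero_le_two

lemma graphGamma_add_smul (u v : V → ℝ) (s : ℝ) (x : V) :
    graphGamma nbr w mu (u + s • v) (u + s • v) x
      = graphGamma nbr w mu u u x + 2 * s * graphGamma nbr w mu u v x
        + s ^ 2 * graphGamma nbr w mu v v x := by
  simp only [graphGamma, Pi.add_apply, Pi.smul_apply, smul_eq_mul, mul_sum, ← sum_add_distrib]
  exact sum_congr rfl fun y _ => by ring

end Gradient

section Energy

variable {V : Type*} [DecidableEq V] (nbr : V → Finset V) (w : V → V → ℝ) (mu : V → ℝ)
  (Ω : Finset V)

def w0Inner (u v : V → ℝ) : ℝ :=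
  ∑ x ∈ Ω ∪ (Ω.biUnion nbr \ Ω), mu x * graphGamma nbr w mu u v x
    + ∑ x ∈ Ω, mu x * (u x * v x)

variable {nbr w mu Ω}

lemma w0NormSq_add_smul (u v : V → ℝ) (s : ℝ) :
    w0NormSq nbr w mu Ω (u + s • v)
      = w0NormSq nbr w mu Ω u + 2 * s * w0Inner nbr w mu Ω u v
        + s ^ 2 * w0NormSq nbr w mu Ω v := by
  set D := Ω ∪ (Ω.biUnion nbr \ Ω)
  have hgrad : ∑ x ∈ D, mu x * graphGamma nbr w mu (u + s • v) (u + s • v) x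
      = ∑ x ∈ D, mu x * graphGamma nbr w mu u u x
        + 2 * s * ∑ x ∈ D, mu x * graphGamma nbr w mu u v x
        + s ^ 2 * ∑ x ∈ D, mu x * graphGamma nbr w mu v v x := by
    simp only [mul_sum, ← sum_add_distrib, graphGamma_add_smul]
    exact sum_congr rfl fun x _ => by ring
  have hmass : ∑ x ∈ Ω, mu x * (u + s • v) x ^ 2
      = ∑ x ∈ Ω, mu x * u x ^ 2 + 2 * s * ∑ x ∈ Ω, mu x * (u x * v x)
        + s ^ 2 * ∑ x ∈ Ω, mu x * v x ^ 2 := by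
    simp only [mul_sum, ← sum_add_distrib, Pi.add_apply, Pi.smul_apply, smul_eq_mul]
    exact sum_congr rfl fun x _ => by ring
  rw [w0NormSq, w0NormSq, w0NormSq, w0Inner, hgrad, hmass]
  ring

lemma w0NormSq_smul (t : ℝ) (u : V → ℝ) :
    w0NormSq nbr w mu Ω (t • u) = t ^ 2 * w0NormSq nbr w mu Ω u := by
  simpa [w0NormSq, w0Inner, graphGamma] using
    w0NormSq_add_smul (nbr := nbr) (w := w) (mu := mu) (Ω := Ω) 0 u t

lemma hasDerivAt_w0NormSq_add_smul (u v : V → ℝ) :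
    HasDerivAt (fun s : ℝ => w0NormSq nbr w mu Ω (u + s • v))
      (2 * w0Inner nbr w mu Ω u v) 0 := by
  simp_rw [w0NormSq_add_smul]
  simpa using ((((hasDerivAt_id' (0 : ℝ)).const_mul 2).mul_const _).const_add _).fun_add
    ((hasDerivAt_pow 2 (0 : ℝ)).mul_const (w0NormSq nbr w mu Ω v))

lemma continuous_w0NormSq : Continuous (w0NormSq nbr w mu Ω) := by
  unfold w0NormSq graphGamma
  fun_prop

lemma w0Inner_single (hsym : ∀ x y, y ∈ nbr x ↔ x ∈ nbr y) (hwsym : ∀ x y, w x y = w y x)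
    (hmu : ∀ x, mu x ≠ 0) (u : V → ℝ) {x₀ : V} (hx₀ : x₀ ∈ Ω) :
    w0Inner nbr w mu Ω u (Pi.single x₀ 1) = mu x₀ * (u x₀ - graphLap nbr w mu u x₀) := by
  set D := Ω ∪ (Ω.biUnion nbr \ Ω)
  set δ : V → ℝ := Pi.single x₀ 1
  have hnbr : D.filter (fun x => x₀ ∈ nbr x) = nbr x₀ := by
    ext x
    rw [mem_filter, ← hsym, and_iff_right_iff_imp]
    intro hx
    by_cases hxΩ : x ∈ Ω
    · exact mem_union_left _ hxΩ
    · exact mem_union_right _ (mem_sdiff.2 ⟨mem_biUnion.2 ⟨x₀, hx₀, hx⟩, hxΩ⟩)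
  have hout : ∑ x ∈ D, ∑ y ∈ nbr x, w x y * (u y - u x) * δ y
      = -(mu x₀ * graphLap nbr w mu u x₀) := by
    simp only [δ, Pi.single_apply, mul_ite, mul_one, mul_zero, sum_ite_eq', ← sum_filter, hnbr,
      mu_mul_graphLap (hmu x₀), ← sum_neg_distrib]
    exact sum_congr rfl fun x _ => by rw [hwsym]; ring
  have hin : ∑ x ∈ D, δ x * ∑ y ∈ nbr x, w x y * (u y - u x)
      = mu x₀ * graphLap nbr w mu u x₀ := by
    simp [δ, Pi.single_apply, mu_mul_graphLap (hmu x₀), D, hx₀]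
  have hgrad : ∑ x ∈ D, mu x * graphGamma nbr w mu u δ x
      = (∑ x ∈ D, ∑ y ∈ nbr x, w x y * (u y - u x) * δ y
        - ∑ x ∈ D, δ x * ∑ y ∈ nbr x, w x y * (u y - u x)) / 2 := by
    rw [← sum_sub_distrib, sum_div]
    refine sum_congr rfl fun x _ => ?_
    rw [mu_mul_graphGamma (hmu x), mul_sum, ← sum_sub_distrib]
    exact congrArg (· / 2) (sum_congr rfl fun y _ => by ring)
  have hmass : ∑ x ∈ Ω, mu x * (u x * δ x) = mu x₀ * u x₀ := by
    simp [δ, Pi.single_apply, hx₀]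
  rw [w0Inner, hgrad, hout, hin, hmass]
  ring

section Positivity

variable (hw : ∀ x y, y ∈ nbr x → 0 ≤ w x y) (hmu : ∀ x, 0 < mu x)
include hw hmu

lemma mu_mul_sq_le_w0NormSq (u : V → ℝ) {x : V} (hx : x ∈ Ω) :
    mu x * u x ^ 2 ≤ w0NormSq nbr w mu Ω u := by
  have hgrad := sum_nonneg fun x (_ : x ∈ Ω ∪ (Ω.biUnion nbr \ Ω)) =>
    mu_mul_graphGamma_self_nonneg hw (hmu x).ne' u
  have hmass := single_le_sum (fun y _ => mul_nonneg (hmu y).le (sq_nonneg (u y))) hx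
  unfold w0NormSq
  linarith

lemma w0NormSq_nonneg (u : V → ℝ) : 0 ≤ w0NormSq nbr w mu Ω u := by
  unfold w0NormSq
  exact add_nonneg (sum_nonneg fun x _ => mu_mul_graphGamma_self_nonneg hw (hmu x).ne' u)
    (sum_nonneg fun x _ => mul_nonneg (hmu x).le (sq_nonneg _))

lemma w0NormSq_pos {u : V → ℝ} {x : V} (hx : x ∈ Ω) (hux : u x ≠ 0) :
    0 < w0NormSq nbr w mu Ω u :=
  (mul_pos (hmu x) (pow_two_pos_of_ne_zero hux)).trans_le (mu_mul_sq_le_w0NormSq hw hmu u hx)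

end Positivity

end Energy

section PowerIntegral

variable {V : Type*} (mu : V → ℝ) (Ω : Finset V)

def intAbsPow (q : ℝ) (u : V → ℝ) : ℝ := ∑ x ∈ Ω, mu x * |u x| ^ q

variable {mu Ω} {q : ℝ}

lemma intAbsPow_smul {t : ℝ} (ht : 0 ≤ t) (u : V → ℝ) :
    intAbsPow mu Ω q (t • u) = t ^ q * intAbsPow mu Ω q u := by
  rw [intAbsPow, intAbsPow, mul_sum]
  refine sum_congr rfl fun x _ => ?_
  rw [Pi.smul_apply, smul_eq_mul, abs_mul, abs_of_nonneg ht, mul_rpow ht (abs_nonneg _)]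
  ring

lemma intAbsPow_pos (hmu : ∀ x, 0 < mu x) {u : V → ℝ} {x : V} (hx : x ∈ Ω)
    (hux : u x ≠ 0) :
    0 < intAbsPow mu Ω q u :=
  (mul_pos (hmu x) (rpow_pos_of_pos (abs_pos.2 hux) q)).trans_le <|
    single_le_sum (fun y _ => mul_nonneg (hmu y).le (rpow_nonneg (abs_nonneg _) q)) hx

lemma exists_ne_zero_of_intAbsPow_ne_zero (hq : q ≠ 0) {u : V → ℝ}
    (hu : intAbsPow mu Ω q u ≠ 0) : ∃ x ∈ Ω, u x ≠ 0 := by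
  obtain ⟨x, hx, hux⟩ := exists_ne_zero_of_sum_ne_zero hu
  refine ⟨x, hx, fun h => hux ?_⟩
  rw [h, abs_zero, zero_rpow hq, mul_zero]

lemma continuous_intAbsPow (hq : 0 ≤ q) : Continuous (intAbsPow mu Ω q) := by
  unfold intAbsPow
  fun_prop (disch := exact fun _ => Or.inr hq)

lemma hasDerivAt_intAbsPow_add_smul (hq : 1 < q) (u v : V → ℝ) :
    HasDerivAt (fun s : ℝ => intAbsPow mu Ω q (u + s • v))
      (∑ x ∈ Ω, mu x * (q * |u x| ^ (q - 2) * u x * v x)) 0 := by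
  refine HasDerivAt.fun_sum fun x _ => HasDerivAt.const_mul _ ?_
  have hline : HasDerivAt (fun s : ℝ => u x + s * v x) (v x) 0 := by
    simpa using ((hasDerivAt_id' (0 : ℝ)).mul_const (v x)).const_add (u x)
  exact (hasDerivAt_abs_rpow (u x) hq).comp_of_eq 0 hline (by simp)

end PowerIntegral

lemma mul_deriv_eq_of_isLocalMin_rpow_div_sq {f g : ℝ → ℝ} {f' g' q c x : ℝ}
    (hf : HasDerivAt f f' x) (hg : HasDerivAt g g' x) (hc : 0 < c) (hfx : f x = c)
    (hgx : g x = c) (hmin : IsLocalMin (fun s => f s ^ q / g s ^ 2) x) : q * f' = 2 * g' := by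
  have hquot := (hf.rpow_const (p := q) (Or.inl (hfx ▸ hc.ne'))).fun_div (hg.fun_pow 2)
    (by rw [hgx]; positivity)
  have hnum := hmin.hasDerivAt_eq_zero hquot
  rw [hfx, hgx, div_eq_zero_iff, or_iff_left (by positivity)] at hnum
  have hcq : c ^ (q - 1) * c = c ^ q := by rw [rpow_sub_one hc.ne', div_mul_cancel₀ _ hc.ne']
  have hfactor : c ^ q * c * (q * f' - 2 * g') = 0 := by
    norm_num at hnum
    linear_combination hnum - c * q * f' * hcq
  have hcqc : c ^ q * c ≠ 0 := by positivity
  linarith [(mul_eq_zero.1 hfactor).resolve_left hcqc]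

section Nehari

variable {V : Type*} [DecidableEq V] (nbr : V → Finset V) (w : V → V → ℝ) (mu : V → ℝ)
  (Ω : Finset V) (p : ℝ)

def nehariQuotient (u : V → ℝ) : ℝ :=
  w0NormSq nbr w mu Ω u ^ (p + 1) / intAbsPow mu Ω (p + 1) u ^ 2

def nehariCone : Set (V → ℝ) :=
  {u | (∀ x, x ∉ Ω → u x = 0) ∧ 0 < intAbsPow mu Ω (p + 1) u}

variable {nbr w mu Ω p}

lemma exists_mem_ne_zero_of_nehari {u : V → ℝ} (hu : nehariOmega nbr w mu Ω p u) :
    ∃ x ∈ Ω, u x ≠ 0 := by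
  by_contra! h
  exact hu.1 (funext fun x => if hx : x ∈ Ω then h x hx else hu.2.1 x hx)

lemma JOmega_eq_of_nehari {u : V → ℝ} (hu : nehariOmega nbr w mu Ω p u) :
    JOmega nbr w mu Ω p u = (1 / 2 - 1 / (p + 1)) * w0NormSq nbr w mu Ω u := by
  rw [JOmega, ← hu.2.2]
  ring

variable (hw : ∀ x y, y ∈ nbr x → 0 ≤ w x y) (hmu : ∀ x, 0 < mu x)
include hw hmu

lemma w0NormSq_pos_of_nehari {u : V → ℝ} (hu : nehariOmega nbr w mu Ω p u) :
    0 < w0NormSq nbr w mu Ω u :=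
  let ⟨_, hx, hux⟩ := exists_mem_ne_zero_of_nehari hu
  w0NormSq_pos hw hmu hx hux

lemma mem_nehariCone_of_nehari {u : V → ℝ} (hu : nehariOmega nbr w mu Ω p u) :
    u ∈ nehariCone mu Ω p :=
  ⟨hu.2.1, (w0NormSq_pos_of_nehari hw hmu hu).trans_eq hu.2.2⟩

lemma nehariQuotient_smul {t : ℝ} (ht : 0 < t) (u : V → ℝ) :
    nehariQuotient nbr w mu Ω p (t • u) = nehariQuotient nbr w mu Ω p u := by
  have hpow : (t ^ 2) ^ (p + 1) = (t ^ (p + 1)) ^ 2 := by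
    rw [← rpow_natCast, ← rpow_natCast, ← rpow_mul ht.le, ← rpow_mul ht.le, mul_comm]
  rw [nehariQuotient, nehariQuotient, w0NormSq_smul, intAbsPow_smul ht.le,
    mul_rpow (sq_nonneg t) (w0NormSq_nonneg hw hmu u), mul_pow, hpow,
    mul_div_mul_left _ _ (by positivity)]

lemma nehariQuotient_of_nehari {u : V → ℝ} (hu : nehariOmega nbr w mu Ω p u) :
    nehariQuotient nbr w mu Ω p u = w0NormSq nbr w mu Ω u ^ (p - 1) := by
  have hA := w0NormSq_pos_of_nehari hw hmu hu
  rw [nehariQuotient, intAbsPow, ← hu.2.2, ← rpow_natCast, ← rpow_sub hA]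
  norm_num
  ring_nf

lemma exists_pos_smul_mem_nehari (hp : 1 < p) {v : V → ℝ} (hv : v ∈ nehariCone mu Ω p) :
    ∃ t : ℝ, 0 < t ∧ nehariOmega nbr w mu Ω p (t • v) := by
  obtain ⟨x, hx, hvx⟩ := exists_ne_zero_of_intAbsPow_ne_zero (by linarith) hv.2.ne'
  have hA := w0NormSq_pos hw hmu hx hvx
  set t := (w0NormSq nbr w mu Ω v / intAbsPow mu Ω (p + 1) v) ^ (p - 1)⁻¹
  have ht : 0 < t := rpow_pos_of_pos (div_pos hA hv.2) _
  have htp : t ^ (p - 1) = w0NormSq nbr w mu Ω v / intAbsPow mu Ω (p + 1) v := by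
    rw [← rpow_mul (div_pos hA hv.2).le, inv_mul_cancel₀ (by linarith), rpow_one]
  have ht2 : t ^ (p + 1) = t ^ (p - 1) * t ^ 2 := by
    rw [← rpow_natCast, ← rpow_add ht, Nat.cast_ofNat]
    ring_nf
  refine ⟨t, ht, fun h => hvx ?_, fun y hy => by simp [hv.1 y hy], ?_⟩
  · simpa [ht.ne'] using congrFun h x
  · change w0NormSq nbr w mu Ω (t • v) = intAbsPow mu Ω (p + 1) (t • v)
    rw [w0NormSq_smul, intAbsPow_smul ht.le, ht2, htp]
    field_simp [hv.2.ne']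

lemma JOmega_le_JOmega_iff (hp : 1 < p) {u v : V → ℝ} (hu : nehariOmega nbr w mu Ω p u)
    (hv : nehariOmega nbr w mu Ω p v) :
    JOmega nbr w mu Ω p u ≤ JOmega nbr w mu Ω p v
      ↔ nehariQuotient nbr w mu Ω p u ≤ nehariQuotient nbr w mu Ω p v := by
  have hc : 0 < 1 / 2 - 1 / (p + 1) := by
    rw [sub_pos]
    exact one_div_lt_one_div_of_lt two_pos (by linarith)
  rw [JOmega_eq_of_nehari hu, JOmega_eq_of_nehari hv, nehariQuotient_of_nehari hw hmu hu,
    nehariQuotient_of_nehari hw hmu hv, mul_le_mul_iff_right₀ hc,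
    rpow_le_rpow_iff (w0NormSq_nonneg hw hmu _) (w0NormSq_nonneg hw hmu _) (by linarith)]

lemma isMinOn_nehariQuotient_of_isMinOn_JOmega (hp : 1 < p) {u : V → ℝ}
    (hu : nehariOmega nbr w mu Ω p u)
    (hmin : ∀ v, nehariOmega nbr w mu Ω p v →
      JOmega nbr w mu Ω p u ≤ JOmega nbr w mu Ω p v) :
    IsMinOn (nehariQuotient nbr w mu Ω p) (nehariCone mu Ω p) u := by
  intro v hv
  obtain ⟨t, ht, htv⟩ := exists_pos_smul_mem_nehari hw hmu hp hv
  calc nehariQuotient nbr w mu Ω p u ≤ nehariQuotient nbr w mu Ω p (t • v) :=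
        (JOmega_le_JOmega_iff hw hmu hp hu htv).1 (hmin _ htv)
    _ = nehariQuotient nbr w mu Ω p v := nehariQuotient_smul hw hmu ht v

lemma exists_nehari_isMinOn_JOmega (hp : 1 < p) {v : V → ℝ} (hv : v ∈ nehariCone mu Ω p)
    (hmin : IsMinOn (nehariQuotient nbr w mu Ω p) (nehariCone mu Ω p) v) :
    ∃ u, nehariOmega nbr w mu Ω p u ∧
      ∀ u', nehariOmega nbr w mu Ω p u' →
        JOmega nbr w mu Ω p u ≤ JOmega nbr w mu Ω p u' := by
  obtain ⟨t, ht, htv⟩ := exists_pos_smul_mem_nehari hw hmu hp hv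
  refine ⟨t • v, htv, fun u' hu' => (JOmega_le_JOmega_iff hw hmu hp htv hu').2 ?_⟩
  rw [nehariQuotient_smul hw hmu ht]
  exact hmin (mem_nehariCone_of_nehari hw hmu hu')

end Nehari

section Minimizer

variable {V : Type*} (Ω : Finset V)

def supportedUnitSphere : Set (V → ℝ) :=
  {u | (∀ x, x ∉ Ω → u x = 0) ∧ ∑ x ∈ Ω, u x ^ 2 = 1}

variable {Ω}

lemma isCompact_supportedUnitSphere : IsCompact (supportedUnitSphere Ω) := by
  have hclosed : IsClosed (supportedUnitSphere Ω) := by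
    refine IsClosed.inter ?_ (isClosed_eq (by fun_prop) continuous_const)
    change IsClosed {u : V → ℝ | ∀ x, x ∉ Ω → u x = 0}
    simp only [Set.ofPred_forall]
    exact isClosed_iInter fun x => isClosed_iInter fun _ =>
      isClosed_eq (continuous_apply x) continuous_const
  refine (isCompact_univ_pi fun _ => isCompact_Icc (a := (-1 : ℝ)) (b := 1)).of_isClosed_subset
    hclosed ?_
  rintro u ⟨hout, hsum⟩ x -
  rw [Set.mem_Icc, ← abs_le, ← sq_le_one_iff_abs_le_one]
  by_cases hx : x ∈ Ω
  · exact hsum ▸ single_le_sum (fun y _ => sq_nonneg (u y)) hx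
  · simp [hout x hx]

lemma exists_pos_smul_mem_supportedUnitSphere {u : V → ℝ} (hu : ∀ x, x ∉ Ω → u x = 0)
    {x : V} (hx : x ∈ Ω) (hux : u x ≠ 0) :
    ∃ t : ℝ, 0 < t ∧ t • u ∈ supportedUnitSphere Ω := by
  have hsum : 0 < ∑ y ∈ Ω, u y ^ 2 :=
    (pow_two_pos_of_ne_zero hux).trans_le (single_le_sum (fun y _ => sq_nonneg (u y)) hx)
  refine ⟨(√(∑ y ∈ Ω, u y ^ 2))⁻¹, by positivity, fun y hy => by simp [hu y hy], ?_⟩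
  simp only [Pi.smul_apply, smul_eq_mul, mul_pow, ← mul_sum, inv_pow, sq_sqrt hsum.le]
  exact inv_mul_cancel₀ hsum.ne'

variable {mu : V → ℝ}

lemma supportedUnitSphere_subset_nehariCone (hmu : ∀ x, 0 < mu x) (p : ℝ) :
    supportedUnitSphere Ω ⊆ nehariCone mu Ω p := by
  rintro u ⟨hout, hsum⟩
  obtain ⟨x, hx, hux⟩ := exists_ne_zero_of_sum_ne_zero (hsum.trans_ne one_ne_zero)
  exact ⟨hout, intAbsPow_pos hmu hx fun h => hux (by simp [h])⟩

variable [DecidableEq V] {nbr : V → Finset V} {w : V → V → ℝ} {p : ℝ}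
  (hw : ∀ x y, y ∈ nbr x → 0 ≤ w x y) (hmu : ∀ x, 0 < mu x)
include hw hmu

lemma exists_isMinOn_nehariQuotient (hp : 1 < p) (hne : Ω.Nonempty) :
    ∃ u ∈ nehariCone mu Ω p,
      IsMinOn (nehariQuotient nbr w mu Ω p) (nehariCone mu Ω p) u := by
  obtain ⟨x₀, hx₀⟩ := hne
  obtain ⟨t₀, -, hsphere⟩ := exists_pos_smul_mem_supportedUnitSphere (u := Pi.single x₀ 1)
    (fun x hx => Pi.single_eq_of_ne (ne_of_mem_of_not_mem hx₀ hx).symm 1) hx₀ (by simp)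
  have hcont : ContinuousOn (nehariQuotient nbr w mu Ω p) (supportedUnitSphere Ω) :=
    (continuous_w0NormSq.rpow_const fun _ => Or.inr (by linarith)).continuousOn.div
      ((continuous_intAbsPow (by linarith)).pow 2).continuousOn
      fun u hu => (pow_pos (supportedUnitSphere_subset_nehariCone hmu p hu).2 2).ne'
  obtain ⟨u, hu, hmin⟩ := isCompact_supportedUnitSphere.exists_isMinOn ⟨_, hsphere⟩ hcont
  refine ⟨u, supportedUnitSphere_subset_nehariCone hmu p hu, fun v hv => ?_⟩
  obtain ⟨x, hx, hvx⟩ := exists_ne_zero_of_intAbsPow_ne_zero (by linarith) hv.2.ne'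
  obtain ⟨t, ht, htv⟩ := exists_pos_smul_mem_supportedUnitSphere hv.1 hx hvx
  change nehariQuotient nbr w mu Ω p u ≤ nehariQuotient nbr w mu Ω p v
  rw [← nehariQuotient_smul hw hmu ht v]
  exact hmin htv

lemma neg_graphLap_add_eq_of_isMinOn_nehariQuotient (hsym : ∀ x y, y ∈ nbr x ↔ x ∈ nbr y)
    (hwsym : ∀ x y, w x y = w y x) (hp : 1 < p) {u : V → ℝ} (hu : nehariOmega nbr w mu Ω p u)
    (hmin : IsMinOn (nehariQuotient nbr w mu Ω p) (nehariCone mu Ω p) u) {x₀ : V}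
    (hx₀ : x₀ ∈ Ω) : -graphLap nbr w mu u x₀ + u x₀ = |u x₀| ^ (p - 1) * u x₀ := by
  set δ : V → ℝ := Pi.single x₀ 1
  have hA := hasDerivAt_w0NormSq_add_smul (nbr := nbr) (w := w) (mu := mu) (Ω := Ω) u δ
  rw [w0Inner_single hsym hwsym (fun x => (hmu x).ne') u hx₀] at hA
  have hB := hasDerivAt_intAbsPow_add_smul (mu := mu) (Ω := Ω) (by linarith : 1 < p + 1) u δ
  simp only [δ, Pi.single_apply, mul_ite, mul_one, mul_zero, sum_ite_eq', if_pos hx₀] at hB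
  have hδ : ∀ x, x ∉ Ω → δ x = 0 := fun x hx =>
    Pi.single_eq_of_ne (ne_of_mem_of_not_mem hx₀ hx).symm 1
  have hnear : ∀ᶠ s in 𝓝 (0 : ℝ), 0 < intAbsPow mu Ω (p + 1) (u + s • δ) :=
    hB.continuousAt.eventually (lt_mem_nhds (by simpa using (mem_nehariCone_of_nehari hw hmu hu).2))
  have hlocal : IsLocalMin (fun s : ℝ => nehariQuotient nbr w mu Ω p (u + s • δ)) 0 := by
    filter_upwards [hnear] with s hs
    simpa using hmin ⟨fun x hx => by simp [hu.2.1 x hx, hδ x hx], hs⟩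
  have hEL := mul_deriv_eq_of_isLocalMin_rpow_div_sq hA hB (w0NormSq_pos_of_nehari hw hmu hu)
    (by simp) (by simpa [intAbsPow] using hu.2.2.symm) hlocal
  rw [show p + 1 - 2 = p - 1 by ring] at hEL
  have hfactor : (p + 1) * 2 * mu x₀
      * (-graphLap nbr w mu u x₀ + u x₀ - |u x₀| ^ (p - 1) * u x₀) = 0 := by
    linear_combination hEL
  have hne : (p + 1) * 2 * mu x₀ ≠ 0 :=
    mul_ne_zero (mul_ne_zero (by linarith) two_ne_zero) (hmu x₀).ne'
  linarith [(mul_eq_zero.1 hfactor).resolve_left hne]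

end Minimizer

end GraphDirichlet

open GraphDirichlet

theorem dirichlet_ground_state_general {V : Type*} [DecidableEq V]
    (nbr : V → Finset V) (w : V → V → ℝ) (mu : V → ℝ)
    (hsym : ∀ x y, y ∈ nbr x ↔ x ∈ nbr y)
    (hwpos : ∀ x y, y ∈ nbr x → 0 < w x y)
    (hwsym : ∀ x y, w x y = w y x)
    (hmu : ∀ x, 0 < mu x)
    (p : ℝ) (hp : 2 ≤ p)
    (Ω : Finset V) (hne : Ω.Nonempty) :
    (∃ u : V → ℝ, nehariOmega nbr w mu Ω p u ∧
      ∀ v : V → ℝ, nehariOmega nbr w mu Ω p v →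
        JOmega nbr w mu Ω p u ≤ JOmega nbr w mu Ω p v) ∧
    (∀ u : V → ℝ, nehariOmega nbr w mu Ω p u →
      (∀ v : V → ℝ, nehariOmega nbr w mu Ω p v →
        JOmega nbr w mu Ω p u ≤ JOmega nbr w mu Ω p v) →
      ∀ x ∈ Ω, -graphLap nbr w mu u x + u x = |u x| ^ (p - 1) * u x) := by
  have hw : ∀ x y, y ∈ nbr x → 0 ≤ w x y := fun x y h => (hwpos x y h).le
  have hp' : 1 < p := by linarith
  obtain ⟨v, hv, hvmin⟩ := exists_isMinOn_nehariQuotient hw hmu hp' hne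
  refine ⟨exists_nehari_isMinOn_JOmega hw hmu hp' hv hvmin, fun u hu hmin x hx => ?_⟩
  exact neg_graphLap_add_eq_of_isMinOn_nehariQuotient hw hmu hsym hwsym hp' hu
    (isMinOn_nehariQuotient_of_isMinOn_JOmega hw hmu hp' hu hmin) hx

/-- The Dirichlet problem −Δu+u=|u|^{p−1}u on a finite connected domain Ω has a
ground state: J_Ω attains its infimum m_Ω on N_Ω, and any minimizer is a
pointwise solution with u = 0 outside Ω. -/
theorem dirichlet_ground_state {V : Type*} [DecidableEq V]
    (nbr : V → Finset V) (w : V → V → ℝ) (mu : V → ℝ)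
    (hsym : ∀ x y, y ∈ nbr x ↔ x ∈ nbr y)
    (hwpos : ∀ x y, y ∈ nbr x → 0 < w x y)
    (hwsym : ∀ x y, w x y = w y x)
    (hmu : ∀ x, 0 < mu x)
    (p : ℝ) (hp : 2 ≤ p)
    (Ω : Finset V) (hne : Ω.Nonempty)
    (hconn : ∀ x ∈ Ω, ∀ y ∈ Ω,
      Relation.ReflTransGen (fun s t => t ∈ nbr s ∧ s ∈ Ω ∧ t ∈ Ω) x y) :
    (∃ u : V → ℝ, nehariOmega nbr w mu Ω p u ∧
      ∀ v : V → ℝ, nehariOmega nbr w mu Ω p v →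
        JOmega nbr w mu Ω p u ≤ JOmega nbr w mu Ω p v) ∧
    (∀ u : V → ℝ, nehariOmega nbr w mu Ω p u →
      (∀ v : V → ℝ, nehariOmega nbr w mu Ω p v →
        JOmega nbr w mu Ω p u ≤ JOmega nbr w mu Ω p v) →
      ∀ x ∈ Ω, -graphLap nbr w mu u x + u x = |u x| ^ (p - 1) * u x) :=
  dirichlet_ground_state_general nbr w mu hsym hwpos hwsym hmu p hp Ω hne
end
end

section
/- Let λ_k→∞ and u_{λ_k} be ground state solutions of −Δu+(λ_k a+1)u=|u|^{p−1}u with ground state levels m_{λ_k}. Then, up to a subsequence, u_{λ_k} converges strongly in W^{1,2}(V) to a function u₀ supported in the potential well Ω={a=0}, u₀ is a ground state solution of the Dirichlet problem −Δu+u=|u|^{p−1}u in Ω with u=0 on ∂Ω, and moreover λ_k∫_V a(x)u_{λ_k}² dμ → 0 and ∫_V|∇u_{λ_k}|²dμ → ∫_V|∇u₀|²dμ. -/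
/-!
Every element of the Nehari manifold `N_Ω` of the well also lies in each `N_λ`, with the same
energy, so the ground states satisfy `‖u_λ‖²_λ ≤ ‖v‖²` for every `v ∈ N_Ω`. Since the measure is
bounded below this bounds `u_λ` pointwise, and a subsequence converges pointwise to some `u₀`.
The bound `λ ∫ a u_λ² ≤ C` forces `u₀ = 0` where `a > 0`, and as `a ≥ 1` off a finite set, the
`L²` and `L^{p+1}` mass of `u_λ` outside that set is `O(1/λ)`; hence
`‖u_λ‖²_λ = ∫ |u_λ|^{p+1} → ∫ |u₀|^{p+1}`, which is positive by the Nehari lower bound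
`‖u_λ‖²_λ ≥ inf μ`. By lower semicontinuity `‖u₀‖² ≤ ∫ |u₀|^{p+1}`; if this were strict, a
rescaling `t u₀` with `t < 1` would lie in `N_Ω` with norm below `lim ‖u_λ‖²_λ`, contradicting the
comparison above. So no energy is lost: `u₀ ∈ N_Ω` minimises the norm there, `‖u_λ‖ → ‖u₀‖` and
`λ ∫ a u_λ² → 0`, and since `u₀` is finitely supported, norm convergence together with pointwise
convergence gives strong convergence.
-/

open Filter Topology Real

noncomputable section

/-- Integrand of the squared E_λ norm: μ(x)(|∇u|²(x) + (λa(x)+1)u(x)²). -/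
def eInt {V : Type*} (nbr : V → Finset V) (w : V → V → ℝ) (mu a : V → ℝ)
    (lam : ℝ) (u : V → ℝ) (x : V) : ℝ :=
  mu x * (graphGamma nbr w mu u u x + (lam * a x + 1) * u x ^ 2)

/-- Squared E_λ norm: ∫_V(|∇u|²+(λa+1)u²)dμ. -/
def eNormSq {V : Type*} (nbr : V → Finset V) (w : V → V → ℝ) (mu a : V → ℝ)
    (lam : ℝ) (u : V → ℝ) : ℝ :=
  ∑' x, eInt nbr w mu a lam u x

/-- Integrand of ∫_V |u|^{p+1} dμ. -/
def pInt {V : Type*} (mu : V → ℝ) (p : ℝ) (u : V → ℝ) (x : V) : ℝ :=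
  mu x * |u x| ^ (p + 1)

/-- ∫_V |u|^{p+1} dμ. -/
def pNorm {V : Type*} (mu : V → ℝ) (p : ℝ) (u : V → ℝ) : ℝ :=
  ∑' x, pInt mu p u x

/-- Membership in E_λ (with finite L^{p+1} norm). -/
def memE {V : Type*} (nbr : V → Finset V) (w : V → V → ℝ) (mu a : V → ℝ)
    (lam p : ℝ) (u : V → ℝ) : Prop :=
  Summable (eInt nbr w mu a lam u) ∧ Summable (pInt mu p u)

/-- The energy functional J_λ. -/
def Jfun {V : Type*} (nbr : V → Finset V) (w : V → V → ℝ) (mu a : V → ℝ)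
    (lam p : ℝ) (u : V → ℝ) : ℝ :=
  (1 / 2) * eNormSq nbr w mu a lam u - (1 / (p + 1)) * pNorm mu p u

/-- The Nehari manifold N_λ. -/
def nehari {V : Type*} (nbr : V → Finset V) (w : V → V → ℝ) (mu a : V → ℝ)
    (lam p : ℝ) (u : V → ℝ) : Prop :=
  u ≠ 0 ∧ memE nbr w mu a lam p u ∧
    eNormSq nbr w mu a lam u = pNorm mu p u

def w12Density {V : Type*} (nbr : V → Finset V) (w : V → V → ℝ) (mu v : V → ℝ) (x : V) : ℝ :=
  mu x * (graphGamma nbr w mu v v x + v x ^ 2)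

section

variable {V : Type*} {nbr : V → Finset V} {w : V → V → ℝ} {mu : V → ℝ}

lemma graphGamma_self_nonneg (hw : ∀ x y, y ∈ nbr x → 0 ≤ w x y) {x : V} (hmu : 0 ≤ mu x)
    (f : V → ℝ) : 0 ≤ graphGamma nbr w mu f f x :=
  mul_nonneg (by positivity)
    (Finset.sum_nonneg fun y hy => mul_nonneg (hw x y hy) (mul_self_nonneg _))

lemma graphGamma_smul (t : ℝ) (f : V → ℝ) (x : V) :
    graphGamma nbr w mu (t • f) (t • f) x = t ^ 2 * graphGamma nbr w mu f f x := by
  simp only [graphGamma, Finset.mul_sum, Pi.smul_apply, smul_eq_mul]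
  exact Finset.sum_congr rfl fun y _ => by ring

lemma graphGamma_congr {f f' g g' : V → ℝ} {x : V}
    (hf : Set.EqOn f f' (insert x (nbr x : Set V)))
    (hg : Set.EqOn g g' (insert x (nbr x : Set V))) :
    graphGamma nbr w mu f g x = graphGamma nbr w mu f' g' x := by
  have hx := Set.mem_insert x (nbr x : Set V)
  refine congrArg _ (Finset.sum_congr rfl fun y hy => ?_)
  have hy' : y ∈ insert x (nbr x : Set V) := Set.mem_insert_of_mem x hy
  rw [hf hx, hg hx, hf hy', hg hy']

lemma continuous_w12Density (x : V) : Continuous fun v : V → ℝ => w12Density nbr w mu v x := by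
  unfold w12Density graphGamma
  fun_prop

lemma tendsto_w12Density {u : ℕ → V → ℝ} {u₀ : V → ℝ} (hconv : Tendsto u atTop (𝓝 u₀)) (x : V) :
    Tendsto (fun k => w12Density nbr w mu (u k) x) atTop (𝓝 (w12Density nbr w mu u₀ x)) :=
  ((continuous_w12Density x).tendsto u₀).comp hconv

lemma w12Density_zero (x : V) : w12Density nbr w mu 0 x = 0 := by
  simp [w12Density, graphGamma]

variable (hw : ∀ x y, y ∈ nbr x → 0 ≤ w x y) (hmu : ∀ x, 0 ≤ mu x)
include hw hmu

lemma w12Density_nonneg (v : V → ℝ) (x : V) : 0 ≤ w12Density nbr w mu v x :=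
  mul_nonneg (hmu x) (add_nonneg (graphGamma_self_nonneg hw (hmu x) v) (sq_nonneg _))

lemma mu_mul_sq_le_w12Density (v : V → ℝ) (x : V) : mu x * v x ^ 2 ≤ w12Density nbr w mu v x :=
  mul_le_mul_of_nonneg_left (le_add_of_nonneg_left (graphGamma_self_nonneg hw (hmu x) v)) (hmu x)

lemma summable_mu_mul_sq {v : V → ℝ} (hs : Summable (w12Density nbr w mu v)) :
    Summable fun x => mu x * v x ^ 2 :=
  hs.of_nonneg_of_le (fun x => mul_nonneg (hmu x) (sq_nonneg _)) (mu_mul_sq_le_w12Density hw hmu v)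

lemma tsum_mu_mul_graphGamma_eq {v : V → ℝ} (hs : Summable (w12Density nbr w mu v)) :
    ∑' x, mu x * graphGamma nbr w mu v v x
      = ∑' x, w12Density nbr w mu v x - ∑' x, mu x * v x ^ 2 := by
  rw [← hs.tsum_sub (summable_mu_mul_sq hw hmu hs)]
  exact tsum_congr fun x => by unfold w12Density; ring

end

section

variable {V : Type*} {nbr : V → Finset V} {w : V → V → ℝ} {mu a : V → ℝ} {p lam : ℝ}

lemma eInt_eq_w12Density_add (lam : ℝ) (v : V → ℝ) (x : V) :
    eInt nbr w mu a lam v x = w12Density nbr w mu v x + lam * (mu x * (a x * v x ^ 2)) := by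
  unfold eInt w12Density
  ring

lemma w12Density_le_eInt (hmu : ∀ x, 0 ≤ mu x) (ha : ∀ x, 0 ≤ a x) (hlam : 0 ≤ lam)
    (v : V → ℝ) (x : V) : w12Density nbr w mu v x ≤ eInt nbr w mu a lam v x := by
  rw [eInt_eq_w12Density_add]
  exact le_add_of_nonneg_right
    (mul_nonneg hlam (mul_nonneg (hmu x) (mul_nonneg (ha x) (sq_nonneg _))))

variable (hw : ∀ x y, y ∈ nbr x → 0 ≤ w x y) (hmu : ∀ x, 0 ≤ mu x) (ha : ∀ x, 0 ≤ a x)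
include hw hmu ha

lemma summable_w12Density (hlam : 0 ≤ lam) {v : V → ℝ} (hv : Summable (eInt nbr w mu a lam v)) :
    Summable (w12Density nbr w mu v) :=
  hv.of_nonneg_of_le (w12Density_nonneg hw hmu v) (w12Density_le_eInt hmu ha hlam v)

lemma summable_potential (hlam : 0 < lam) {v : V → ℝ} (hv : Summable (eInt nbr w mu a lam v)) :
    Summable fun x => mu x * (a x * v x ^ 2) :=
  (summable_mul_left_iff hlam.ne').1 <|
    (hv.sub (summable_w12Density hw hmu ha hlam.le hv)).congr fun x => by
      rw [eInt_eq_w12Density_add]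
      ring

lemma eNormSq_eq_tsum_add (hlam : 0 ≤ lam) {v : V → ℝ} (hv : Summable (eInt nbr w mu a lam v)) :
    eNormSq nbr w mu a lam v
      = ∑' x, w12Density nbr w mu v x + lam * ∑' x, mu x * (a x * v x ^ 2) := by
  have hs := summable_w12Density hw hmu ha hlam hv
  have hpot : Summable fun x => lam * (mu x * (a x * v x ^ 2)) :=
    (hv.sub hs).congr fun x => by
      rw [eInt_eq_w12Density_add]
      ring
  rw [eNormSq, tsum_congr (eInt_eq_w12Density_add lam v), hs.tsum_add hpot, tsum_mul_left]

lemma lam_mul_tsum_le_eNormSq (hlam : 0 ≤ lam) {v : V → ℝ}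
    (hv : Summable (eInt nbr w mu a lam v)) :
    lam * ∑' x, mu x * (a x * v x ^ 2) ≤ eNormSq nbr w mu a lam v := by
  rw [eNormSq_eq_tsum_add hw hmu ha hlam hv]
  exact le_add_of_nonneg_left (tsum_nonneg (w12Density_nonneg hw hmu v))

lemma tsum_mu_mul_sq_le_eNormSq (hlam : 0 ≤ lam) {v : V → ℝ}
    (hv : Summable (eInt nbr w mu a lam v)) :
    ∑' x, mu x * v x ^ 2 ≤ eNormSq nbr w mu a lam v :=
  (summable_mu_mul_sq hw hmu (summable_w12Density hw hmu ha hlam hv)).tsum_le_tsum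
    (fun x => (mu_mul_sq_le_w12Density hw hmu v x).trans (w12Density_le_eInt hmu ha hlam v x)) hv

lemma mu_mul_sq_le_eNormSq (hlam : 0 ≤ lam) {v : V → ℝ} (hv : Summable (eInt nbr w mu a lam v))
    (x : V) : mu x * v x ^ 2 ≤ eNormSq nbr w mu a lam v :=
  (mu_mul_sq_le_w12Density hw hmu v x).trans <| (w12Density_le_eInt hmu ha hlam v x).trans <|
    hv.le_tsum x fun y _ =>
      (w12Density_nonneg hw hmu v y).trans (w12Density_le_eInt hmu ha hlam v y)

end

section

variable {V : Type*} {nbr : V → Finset V} {w : V → V → ℝ} {mu a : V → ℝ} {p lam : ℝ}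

lemma abs_le_sqrt_of_eNormSq_le {mumin M : ℝ} (hw : ∀ x y, y ∈ nbr x → 0 ≤ w x y)
    (hmin : 0 < mumin) (hmu : ∀ x, mumin ≤ mu x) (ha : ∀ x, 0 ≤ a x) (hlam : 0 ≤ lam)
    {v : V → ℝ} (hv : Summable (eInt nbr w mu a lam v)) (hM : eNormSq nbr w mu a lam v ≤ M)
    (x : V) : |v x| ≤ √(M / mumin) := by
  refine Real.abs_le_sqrt ((le_div_iff₀ hmin).2 ?_)
  calc v x ^ 2 * mumin ≤ mu x * v x ^ 2 := by
        rw [mul_comm]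
        exact mul_le_mul_of_nonneg_right (hmu x) (sq_nonneg _)
    _ ≤ M := (mu_mul_sq_le_eNormSq hw (fun y => hmin.le.trans (hmu y)) ha hlam hv x).trans hM

lemma pInt_le_rpow_mul {v : V → ℝ} {x : V} (hmu : 0 ≤ mu x) (hp : 1 ≤ p) {r : ℝ}
    (hr : |v x| ≤ r) : pInt mu p v x ≤ r ^ (p - 1) * (mu x * v x ^ 2) := by
  have hsplit : |v x| ^ (p + 1) = |v x| ^ (p - 1) * v x ^ 2 := by
    rw [show p + 1 = (p - 1) + 2 by ring, Real.rpow_add' (abs_nonneg _) (by linarith),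
      Real.rpow_two, sq_abs]
  calc pInt mu p v x = |v x| ^ (p - 1) * (mu x * v x ^ 2) := by rw [pInt, hsplit]; ring
    _ ≤ r ^ (p - 1) * (mu x * v x ^ 2) :=
      mul_le_mul_of_nonneg_right (Real.rpow_le_rpow (abs_nonneg _) hr (by linarith))
        (mul_nonneg hmu (sq_nonneg _))

lemma pNorm_le_rpow_mul (hmu : ∀ x, 0 ≤ mu x) (hp : 1 ≤ p) {v : V → ℝ} {r : ℝ}
    (hr : ∀ x, |v x| ≤ r) (hvp : Summable (pInt mu p v)) (hv : Summable fun x => mu x * v x ^ 2) :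
    pNorm mu p v ≤ r ^ (p - 1) * ∑' x, mu x * v x ^ 2 := by
  rw [pNorm, ← tsum_mul_left]
  exact hvp.tsum_le_tsum (fun x => pInt_le_rpow_mul (hmu x) hp (hr x)) (hv.mul_left _)

/-- On the Nehari manifold `‖v‖² = ∫ |v|^{p+1}`, which is impossible once `|v| < 1` everywhere. -/
lemma le_eNormSq_of_nehari {mumin : ℝ} (hw : ∀ x y, y ∈ nbr x → 0 ≤ w x y)
    (hmin : 0 < mumin) (hmu : ∀ x, mumin ≤ mu x) (ha : ∀ x, 0 ≤ a x) (hlam : 0 ≤ lam)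
    (hp : 1 < p) {v : V → ℝ} (hv : nehari nbr w mu a lam p v) :
    mumin ≤ eNormSq nbr w mu a lam v := by
  have hmu0 : ∀ x, 0 ≤ mu x := fun x => hmin.le.trans (hmu x)
  obtain ⟨hne, ⟨hs, hsp⟩, hEP⟩ := hv
  set E := eNormSq nbr w mu a lam v
  by_contra! hlt
  obtain ⟨x, hx⟩ := Function.ne_iff.1 hne
  have hE : 0 < E :=
    (mul_pos (hmin.trans_le (hmu x)) (sq_pos_of_ne_zero (by simpa using hx))).trans_le
      (mu_mul_sq_le_eNormSq hw hmu0 ha hlam hs x)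
  have hs1 : √(E / mumin) ^ (p - 1) < 1 :=
    Real.rpow_lt_one (Real.sqrt_nonneg _)
      ((Real.sqrt_lt' one_pos).2 (by rwa [one_pow, div_lt_one hmin])) (by linarith)
  have hP := pNorm_le_rpow_mul hmu0 hp.le (abs_le_sqrt_of_eNormSq_le hw hmin hmu ha hlam hs le_rfl)
    hsp (summable_mu_mul_sq hw hmu0 (summable_w12Density hw hmu0 ha hlam hs))
  have hT := tsum_mu_mul_sq_le_eNormSq hw hmu0 ha hlam hs
  have : E < E := calc
    E = pNorm mu p v := hEP
    _ ≤ √(E / mumin) ^ (p - 1) * ∑' x, mu x * v x ^ 2 := hP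
    _ ≤ √(E / mumin) ^ (p - 1) * E :=
      mul_le_mul_of_nonneg_left hT (Real.rpow_nonneg (Real.sqrt_nonneg _) _)
    _ < E := mul_lt_of_lt_one_left hE hs1
  exact lt_irrefl E this

lemma one_half_sub_one_div_pos (hp : 1 < p) : 0 < 1 / 2 - 1 / (p + 1) := by
  have : 1 / (p + 1) < 1 / 2 := one_div_lt_one_div_of_lt two_pos (by linarith)
  linarith

lemma Jfun_eq_of_nehari {v : V → ℝ} (hv : nehari nbr w mu a lam p v) :
    Jfun nbr w mu a lam p v = (1 / 2 - 1 / (p + 1)) * eNormSq nbr w mu a lam v := by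
  rw [Jfun, ← hv.2.2]
  ring

lemma sum_abs_smul_rpow {t : ℝ} (ht : 0 ≤ t) (s : Finset V) (f : V → ℝ) :
    ∑ x ∈ s, mu x * |(t • f) x| ^ (p + 1) = t ^ (p + 1) * ∑ x ∈ s, mu x * |f x| ^ (p + 1) := by
  rw [Finset.mul_sum]
  refine Finset.sum_congr rfl fun x _ => ?_
  rw [Pi.smul_apply, smul_eq_mul, abs_mul, abs_of_nonneg ht, Real.mul_rpow ht (abs_nonneg _)]
  ring

lemma pNorm_eq_sum {Ω : Finset V} (hp : p + 1 ≠ 0) {v : V → ℝ} (hv : ∀ x ∉ Ω, v x = 0) :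
    pNorm mu p v = ∑ x ∈ Ω, mu x * |v x| ^ (p + 1) :=
  tsum_eq_sum fun x hx => by simp [pInt, hv x hx, Real.zero_rpow hp]

lemma sum_abs_rpow_pos {Ω : Finset V} (hmu : ∀ x, 0 < mu x) {f : V → ℝ} {x : V} (hx : x ∈ Ω)
    (hfx : f x ≠ 0) :
    0 < ∑ y ∈ Ω, mu y * |f y| ^ (p + 1) :=
  Finset.sum_pos' (fun y _ => mul_nonneg (hmu y).le (Real.rpow_nonneg (abs_nonneg _) _))
    ⟨x, hx, mul_pos (hmu x) (Real.rpow_pos_of_pos (abs_pos.2 hfx) _)⟩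

end

section

variable {V : Type*}

lemma tsum_eq_tsum_add_sum_sub {f g : V → ℝ} (s : Finset V) (hg : Summable g)
    (hfg : ∀ x ∉ s, f x = g x) : ∑' x, f x = ∑' x, g x + ∑ x ∈ s, (f x - g x) := by
  have h : ∀ x ∉ s, f x - g x = 0 := fun x hx => sub_eq_zero.2 (hfg x hx)
  calc ∑' x, f x = ∑' x, (g x + (f x - g x)) := by simp
    _ = ∑' x, g x + ∑' x, (f x - g x) := hg.tsum_add (summable_of_ne_finset_zero h)
    _ = ∑' x, g x + ∑ x ∈ s, (f x - g x) := by rw [tsum_eq_sum h]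

lemma tendsto_tsum_of_le_off_finset {f h : ℕ → V → ℝ} {g : V → ℝ} {ε : ℕ → ℝ} (s : Finset V)
    (hf : ∀ k, Summable (f k)) (hf0 : ∀ k x, 0 ≤ f k x) (hh : ∀ k, Summable (h k))
    (hh0 : ∀ k x, 0 ≤ h k x) (hfh : ∀ k, ∀ x ∉ s, f k x ≤ h k x) (hhε : ∀ k, ∑' x, h k x ≤ ε k)
    (hε : Tendsto ε atTop (𝓝 0)) (hlim : ∀ x ∈ s, Tendsto (fun k => f k x) atTop (𝓝 (g x)))
    (hg : ∀ x ∉ s, g x = 0) :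
    Tendsto (fun k => ∑' x, f k x) atTop (𝓝 (∑' x, g x)) := by
  have htail : Tendsto (fun k => ∑' x : ↥(s : Set V)ᶜ, f k x) atTop (𝓝 0) := by
    refine squeeze_zero (fun k => tsum_nonneg fun x => hf0 k x) (fun k => ?_) hε
    calc ∑' x : ↥(s : Set V)ᶜ, f k x ≤ ∑' x : ↥(s : Set V)ᶜ, h k x :=
          ((hf k).subtype _).tsum_le_tsum (fun x => hfh k x x.2) ((hh k).subtype _)
      _ ≤ ∑' x, h k x := Summable.tsum_subtype_le (h k) _ (hh0 k) (hh k)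
      _ ≤ ε k := hhε k
  have hsum := (tendsto_finsetSum s hlim).add htail
  rw [add_zero] at hsum
  rw [tsum_eq_sum hg]
  exact hsum.congr fun k => (hf k).sum_add_tsum_compl

lemma countable_of_finite_setOf_le (d : V → ℕ) (hd : ∀ R : ℕ, {x : V | d x ≤ R}.Finite) :
    Countable V := by
  rw [← Set.countable_univ_iff]
  exact (Set.countable_iUnion fun R => (hd R).countable).mono
    fun x _ => Set.mem_iUnion.2 ⟨d x, show d x ≤ d x from le_rfl⟩

lemma exists_finset_forall_notMem_le {a : V → ℝ} (d : V → ℕ)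
    (hd : ∀ R : ℕ, {x : V | d x ≤ R}.Finite) (ha : ∀ C : ℝ, ∃ R : ℕ, ∀ x, R < d x → C ≤ a x)
    (C : ℝ) : ∃ B : Finset V, ∀ x ∉ B, C ≤ a x := by
  obtain ⟨R, hR⟩ := ha C
  exact ⟨(hd R).toFinset, fun x hx => hR x (not_le.1 fun h => hx ((hd R).mem_toFinset.2 h))⟩

lemma exists_strictMono_tendsto_of_abs_le [Countable V] {u : ℕ → V → ℝ} {b : ℝ}
    (hb : ∀ k x, |u k x| ≤ b) :
    ∃ φ : ℕ → ℕ, ∃ u₀ : V → ℝ, StrictMono φ ∧ Tendsto (fun k => u (φ k)) atTop (𝓝 u₀) := by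
  obtain ⟨u₀, -, φ, hφ, h⟩ :=
    (isCompact_univ_pi fun _ : V => isCompact_Icc (a := -b) (b := b)).tendsto_subseq
      (x := u) fun k => Set.mem_univ_pi.2 fun x => abs_le.1 (hb k x)
  exact ⟨φ, u₀, hφ, h⟩

lemma eq_zero_of_tendsto_of_mul_sq_le {s lam : ℕ → ℝ} {c M y : ℝ} (hc : 0 < c)
    (hlam : Tendsto lam atTop atTop) (hle : ∀ k, lam k * (c * s k ^ 2) ≤ M)
    (hs : Tendsto s atTop (𝓝 y)) : y = 0 := by
  by_contra hy
  have h := hlam.atTop_mul_pos (mul_pos hc (sq_pos_of_ne_zero hy)) ((hs.pow 2).const_mul c)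
  obtain ⟨k, hk⟩ := (h.eventually_gt_atTop M).exists
  exact (hle k).not_gt hk

variable {nbr : V → Finset V} {w : V → V → ℝ} {mu a : V → ℝ} {p : ℝ} {lam : ℕ → ℝ}
  {u : ℕ → V → ℝ} {u₀ : V → ℝ}

lemma tsum_w12Density_le_of_tendsto {c : ℕ → ℝ} {L : ℝ} (hw : ∀ x y, y ∈ nbr x → 0 ≤ w x y)
    (hmu : ∀ x, 0 ≤ mu x) (hconv : Tendsto u atTop (𝓝 u₀))
    (hs : ∀ k, Summable (w12Density nbr w mu (u k)))
    (hle : ∀ k, ∑' x, w12Density nbr w mu (u k) x ≤ c k) (hc : Tendsto c atTop (𝓝 L)) :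
    ∑' x, w12Density nbr w mu u₀ x ≤ L :=
  Real.tsum_le_of_sum_le (w12Density_nonneg hw hmu u₀) fun F =>
    le_of_tendsto_of_tendsto' (tendsto_finsetSum F fun x _ => tendsto_w12Density hconv x) hc
      fun k =>
        (Summable.sum_le_tsum F (fun x _ => w12Density_nonneg hw hmu _ x) (hs k)).trans (hle k)

lemma tendsto_tsum_mu_mul_graphGamma (hw : ∀ x y, y ∈ nbr x → 0 ≤ w x y) (hmu : ∀ x, 0 ≤ mu x)
    (hs : ∀ k, Summable (w12Density nbr w mu (u k))) (hs₀ : Summable (w12Density nbr w mu u₀))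
    (hnorm : Tendsto (fun k => ∑' x, w12Density nbr w mu (u k) x) atTop
      (𝓝 (∑' x, w12Density nbr w mu u₀ x)))
    (hsq : Tendsto (fun k => ∑' x, mu x * u k x ^ 2) atTop (𝓝 (∑' x, mu x * u₀ x ^ 2))) :
    Tendsto (fun k => ∑' x, mu x * graphGamma nbr w mu (u k) (u k) x) atTop
      (𝓝 (∑' x, mu x * graphGamma nbr w mu u₀ u₀ x)) := by
  rw [tsum_mu_mul_graphGamma_eq hw hmu hs₀]
  exact (hnorm.sub hsq).congr fun k => (tsum_mu_mul_graphGamma_eq hw hmu (hs k)).symm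

lemma apply_eq_zero_of_tendsto {M : ℝ} (hw : ∀ x y, y ∈ nbr x → 0 ≤ w x y)
    (hmu : ∀ x, 0 < mu x) (ha : ∀ x, 0 ≤ a x) (hlam0 : ∀ k, 0 < lam k)
    (hlam : Tendsto lam atTop atTop) (hu : ∀ k, Summable (eInt nbr w mu a (lam k) (u k)))
    (hM : ∀ k, eNormSq nbr w mu a (lam k) (u k) ≤ M) (hconv : Tendsto u atTop (𝓝 u₀))
    (x : V) (hx : 0 < a x) : u₀ x = 0 := by
  have hmu0 : ∀ x, 0 ≤ mu x := fun x => (hmu x).le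
  refine eq_zero_of_tendsto_of_mul_sq_le (M := M) (mul_pos (hmu x) hx) hlam (fun k => ?_)
    (tendsto_pi_nhds.1 hconv x)
  calc lam k * (mu x * a x * u k x ^ 2) = lam k * (mu x * (a x * u k x ^ 2)) := by ring
    _ ≤ lam k * ∑' y, mu y * (a y * u k y ^ 2) :=
      mul_le_mul_of_nonneg_left ((summable_potential hw hmu0 ha (hlam0 k) (hu k)).le_tsum x
        fun y _ => mul_nonneg (hmu0 y) (mul_nonneg (ha y) (sq_nonneg _))) (hlam0 k).le
    _ ≤ eNormSq nbr w mu a (lam k) (u k) := lam_mul_tsum_le_eNormSq hw hmu0 ha (hlam0 k).le (hu k)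
    _ ≤ M := hM k

/-- Off a finite set `a ≥ 1`, so there the mass of `u k` is at most `∫ a (u k)² ≤ M / lam k`. -/
lemma tendsto_tsum_sq_and_pNorm {M b : ℝ} (d : V → ℕ) (hw : ∀ x y, y ∈ nbr x → 0 ≤ w x y)
    (hmu : ∀ x, 0 ≤ mu x) (ha : ∀ x, 0 ≤ a x) (hd : ∀ R : ℕ, {x : V | d x ≤ R}.Finite)
    (hainf : ∀ C : ℝ, ∃ R : ℕ, ∀ x, R < d x → C ≤ a x) (hp : 1 ≤ p)
    (hlam0 : ∀ k, 0 < lam k) (hlam : Tendsto lam atTop atTop)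
    (hu : ∀ k, memE nbr w mu a (lam k) p (u k)) (hM : ∀ k, eNormSq nbr w mu a (lam k) (u k) ≤ M)
    (hb : ∀ k x, |u k x| ≤ b) (hconv : Tendsto u atTop (𝓝 u₀))
    (hsupp : ∀ x, 0 < a x → u₀ x = 0) :
    Tendsto (fun k => ∑' x, mu x * u k x ^ 2) atTop (𝓝 (∑' x, mu x * u₀ x ^ 2)) ∧
      Tendsto (fun k => pNorm mu p (u k)) atTop (𝓝 (pNorm mu p u₀)) := by
  obtain ⟨B, hB⟩ := exists_finset_forall_notMem_le d hd hainf 1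
  have hB0 : ∀ x ∉ B, u₀ x = 0 := fun x hx => hsupp x (one_pos.trans_le (hB x hx))
  have hpt : ∀ x, Tendsto (fun k => u k x) atTop (𝓝 (u₀ x)) := tendsto_pi_nhds.1 hconv
  have hpot0 : ∀ k x, 0 ≤ mu x * (a x * u k x ^ 2) := fun k x =>
    mul_nonneg (hmu x) (mul_nonneg (ha x) (sq_nonneg _))
  have hpot : ∀ k, Summable fun x => mu x * (a x * u k x ^ 2) := fun k =>
    summable_potential hw hmu ha (hlam0 k) (hu k).1
  have hpotM : ∀ k, ∑' x, mu x * (a x * u k x ^ 2) ≤ M / lam k := fun k =>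
    (le_div_iff₀' (hlam0 k)).2
      ((lam_mul_tsum_le_eNormSq hw hmu ha (hlam0 k).le (hu k).1).trans (hM k))
  have hε : Tendsto (fun k => M / lam k) atTop (𝓝 0) := tendsto_const_nhds.div_atTop hlam
  have hsq : ∀ k, ∀ x ∉ B, mu x * u k x ^ 2 ≤ mu x * (a x * u k x ^ 2) := fun k x hx =>
    mul_le_mul_of_nonneg_left (le_mul_of_one_le_left (sq_nonneg _) (hB x hx)) (hmu x)
  constructor
  · exact tendsto_tsum_of_le_off_finset B
      (fun k => summable_mu_mul_sq hw hmu (summable_w12Density hw hmu ha (hlam0 k).le (hu k).1))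
      (fun k x => mul_nonneg (hmu x) (sq_nonneg _)) hpot hpot0 hsq hpotM hε
      (fun x _ => ((hpt x).pow 2).const_mul _) fun x hx => by simp [hB0 x hx]
  · have hbp : 0 ≤ |b| ^ (p - 1) := Real.rpow_nonneg (abs_nonneg b) _
    exact tendsto_tsum_of_le_off_finset (ε := fun k => |b| ^ (p - 1) * (M / lam k)) B
      (fun k => (hu k).2)
      (fun k x => mul_nonneg (hmu x) (Real.rpow_nonneg (abs_nonneg _) _))
      (fun k => (hpot k).mul_left (|b| ^ (p - 1))) (fun k x => mul_nonneg hbp (hpot0 k x))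
      (fun k x hx => (pInt_le_rpow_mul (hmu x) hp ((hb k x).trans (le_abs_self b))).trans
        (mul_le_mul_of_nonneg_left (hsq k x hx) hbp))
      (fun k => by rw [tsum_mul_left]; exact mul_le_mul_of_nonneg_left (hpotM k) hbp)
      (by simpa using hε.const_mul (|b| ^ (p - 1)))
      (fun x _ => ((hpt x).abs.rpow_const (Or.inr (by linarith))).const_mul (mu x))
      fun x hx => by simp [pInt, hB0 x hx, Real.zero_rpow (by linarith : p + 1 ≠ 0)]

end

section

variable {V : Type*} [DecidableEq V] {nbr : V → Finset V} {w : V → V → ℝ} {mu a : V → ℝ}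
  {Ω : Finset V} {p lam : ℝ}

lemma eqOn_zero_of_notMem (hsym : ∀ x y, y ∈ nbr x ↔ x ∈ nbr y) {v : V → ℝ}
    (hv : ∀ x ∉ Ω, v x = 0) {x : V} (hx : x ∉ Ω ∪ Ω.biUnion nbr) :
    Set.EqOn v 0 (insert x (nbr x : Set V)) := by
  rintro y (rfl | hy)
  · exact hv y fun h => hx (Finset.mem_union_left _ h)
  · exact hv y fun h => hx (Finset.mem_union_right _ (Finset.mem_biUnion.2 ⟨y, h, (hsym x y).1 hy⟩))

lemma graphGamma_sub_self_of_notMem (hsym : ∀ x y, y ∈ nbr x ↔ x ∈ nbr y) (f : V → ℝ)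
    {g : V → ℝ} (hg : ∀ x ∉ Ω, g x = 0) {x : V} (hx : x ∉ Ω ∪ Ω.biUnion nbr) :
    graphGamma nbr w mu (f - g) (f - g) x = graphGamma nbr w mu f f x := by
  have h : Set.EqOn (f - g) f (insert x (nbr x : Set V)) := fun y hy => by
    simp [eqOn_zero_of_notMem hsym hg hx hy]
  exact graphGamma_congr h h

lemma w12Density_eq_zero_of_notMem (hsym : ∀ x y, y ∈ nbr x ↔ x ∈ nbr y) {v : V → ℝ}
    (hv : ∀ x ∉ Ω, v x = 0) {x : V} (hx : x ∉ Ω ∪ Ω.biUnion nbr) : w12Density nbr w mu v x = 0 := by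
  rw [← w12Density_zero (nbr := nbr) (w := w) (mu := mu) x, w12Density, w12Density,
    graphGamma_congr (eqOn_zero_of_notMem hsym hv hx) (eqOn_zero_of_notMem hsym hv hx),
    eqOn_zero_of_notMem hsym hv hx (Set.mem_insert x _)]

lemma w0NormSq_eq_tsum_w12Density (hsym : ∀ x y, y ∈ nbr x ↔ x ∈ nbr y) {v : V → ℝ}
    (hv : ∀ x ∉ Ω, v x = 0) : w0NormSq nbr w mu Ω v = ∑' x, w12Density nbr w mu v x := by
  rw [tsum_eq_sum fun x => w12Density_eq_zero_of_notMem hsym hv, w0NormSq,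
    Finset.union_sdiff_self_eq_union]
  simp only [w12Density, mul_add, Finset.sum_add_distrib]
  exact congrArg _ (Finset.sum_subset Finset.subset_union_left fun x _ hx => by simp [hv x hx])

lemma eNormSq_eq_w0NormSq (hsym : ∀ x y, y ∈ nbr x ↔ x ∈ nbr y) (hΩa : ∀ x ∈ Ω, a x = 0)
    {v : V → ℝ} (hv : ∀ x ∉ Ω, v x = 0) : eNormSq nbr w mu a lam v = w0NormSq nbr w mu Ω v := by
  rw [w0NormSq_eq_tsum_w12Density hsym hv, eNormSq]
  refine tsum_congr fun x => ?_
  rw [eInt_eq_w12Density_add]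
  by_cases hx : x ∈ Ω <;> simp [hΩa, hv, hx]

lemma nehari_of_nehariOmega (hsym : ∀ x y, y ∈ nbr x ↔ x ∈ nbr y) (hΩa : ∀ x ∈ Ω, a x = 0)
    (hp : p + 1 ≠ 0) {v : V → ℝ} (hv : nehariOmega nbr w mu Ω p v) : nehari nbr w mu a lam p v := by
  obtain ⟨hne, hsupp, heq⟩ := hv
  refine ⟨hne, ⟨?_, ?_⟩, ?_⟩
  · exact summable_of_ne_finset_zero fun x hx => by
      rw [eInt_eq_w12Density_add, w12Density_eq_zero_of_notMem hsym hsupp hx,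
        hsupp x fun h => hx (Finset.mem_union_left _ h)]
      ring
  · exact summable_of_ne_finset_zero (s := Ω) fun x hx => by
      simp [pInt, hsupp x hx, Real.zero_rpow hp]
  · rw [eNormSq_eq_w0NormSq hsym hΩa hsupp, pNorm_eq_sum hp hsupp, heq]

lemma JOmega_eq_of_nehariOmega {v : V → ℝ} (hv : nehariOmega nbr w mu Ω p v) :
    JOmega nbr w mu Ω p v = (1 / 2 - 1 / (p + 1)) * w0NormSq nbr w mu Ω v := by
  rw [JOmega, ← hv.2.2]
  ring

lemma JOmega_le_of_w0NormSq_le (hp : 1 < p) {u v : V → ℝ} (hu : nehariOmega nbr w mu Ω p u)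
    (hv : nehariOmega nbr w mu Ω p v) (h : w0NormSq nbr w mu Ω u ≤ w0NormSq nbr w mu Ω v) :
    JOmega nbr w mu Ω p u ≤ JOmega nbr w mu Ω p v := by
  rw [JOmega_eq_of_nehariOmega hu, JOmega_eq_of_nehariOmega hv]
  exact mul_le_mul_of_nonneg_left h (one_half_sub_one_div_pos hp).le

lemma eNormSq_le_w0NormSq (hsym : ∀ x y, y ∈ nbr x ↔ x ∈ nbr y) (hΩa : ∀ x ∈ Ω, a x = 0)
    (hp : 1 < p) {u : V → ℝ} (hu : nehari nbr w mu a lam p u)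
    (hground : ∀ v, nehari nbr w mu a lam p v → Jfun nbr w mu a lam p u ≤ Jfun nbr w mu a lam p v)
    {v : V → ℝ} (hv : nehariOmega nbr w mu Ω p v) :
    eNormSq nbr w mu a lam u ≤ w0NormSq nbr w mu Ω v := by
  have hvN : nehari nbr w mu a lam p v := nehari_of_nehariOmega hsym hΩa (by linarith) hv
  have h := hground v hvN
  rw [Jfun_eq_of_nehari hu, Jfun_eq_of_nehari hvN, eNormSq_eq_w0NormSq hsym hΩa hv.2.1] at h
  exact le_of_mul_le_mul_left h (one_half_sub_one_div_pos hp)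

lemma w0NormSq_smul (t : ℝ) (f : V → ℝ) :
    w0NormSq nbr w mu Ω (t • f) = t ^ 2 * w0NormSq nbr w mu Ω f := by
  rw [w0NormSq, w0NormSq, mul_add, Finset.mul_sum, Finset.mul_sum]
  congr 1 <;> refine Finset.sum_congr rfl fun x _ => ?_
  · rw [graphGamma_smul]
    ring
  · simp only [Pi.smul_apply, smul_eq_mul]
    ring

lemma nehariOmega_rpow_smul (hp : 1 < p) {f : V → ℝ} (hf : ∀ x ∉ Ω, f x = 0) (hf0 : f ≠ 0)
    (hW : 0 < w0NormSq nbr w mu Ω f) (hP : 0 < ∑ x ∈ Ω, mu x * |f x| ^ (p + 1)) :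
    nehariOmega nbr w mu Ω p
      ((w0NormSq nbr w mu Ω f / ∑ x ∈ Ω, mu x * |f x| ^ (p + 1)) ^ (p - 1)⁻¹ • f) := by
  set W := w0NormSq nbr w mu Ω f
  set P := ∑ x ∈ Ω, mu x * |f x| ^ (p + 1)
  set t := (W / P) ^ (p - 1)⁻¹
  have ht : 0 < t := Real.rpow_pos_of_pos (div_pos hW hP) _
  have htp : t ^ (p + 1) = t ^ 2 * (W / P) := by
    rw [show p + 1 = 2 + (p - 1) by ring, Real.rpow_add ht, Real.rpow_two,
      Real.rpow_inv_rpow (div_pos hW hP).le (by linarith)]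
  refine ⟨smul_ne_zero ht.ne' hf0, fun x hx => by simp [hf x hx], ?_⟩
  rw [w0NormSq_smul, sum_abs_smul_rpow ht.le, htp, mul_assoc, div_mul_cancel₀ _ hP.ne']

lemma w0NormSq_pos (hw : ∀ x y, y ∈ nbr x → 0 ≤ w x y) (hmu : ∀ x, 0 < mu x) {f : V → ℝ} {x : V}
    (hx : x ∈ Ω) (hfx : f x ≠ 0) : 0 < w0NormSq nbr w mu Ω f :=
  add_pos_of_nonneg_of_pos
    (Finset.sum_nonneg fun y _ => mul_nonneg (hmu y).le (graphGamma_self_nonneg hw (hmu y).le f))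
    (Finset.sum_pos' (fun y _ => mul_nonneg (hmu y).le (sq_nonneg _))
      ⟨x, hx, mul_pos (hmu x) (sq_pos_of_ne_zero hfx)⟩)

lemma exists_nehariOmega (hw : ∀ x y, y ∈ nbr x → 0 ≤ w x y) (hmu : ∀ x, 0 < mu x) (hp : 1 < p)
    (hΩ : Ω.Nonempty) : ∃ v, nehariOmega nbr w mu Ω p v := by
  obtain ⟨x, hx⟩ := hΩ
  have hf : ∀ y ∉ Ω, (Pi.single x 1 : V → ℝ) y = 0 := fun y hy =>
    Pi.single_eq_of_ne (ne_of_mem_of_not_mem hx hy).symm _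
  have hfx : (Pi.single x 1 : V → ℝ) x ≠ 0 := by simp
  exact ⟨_, nehariOmega_rpow_smul hp hf (fun h => hfx (congrFun h x)) (w0NormSq_pos hw hmu hx hfx)
    (sum_abs_rpow_pos hmu hx hfx)⟩

lemma exists_nehariOmega_w0NormSq_lt (hw : ∀ x y, y ∈ nbr x → 0 ≤ w x y) (hmu : ∀ x, 0 < mu x)
    (hp : 1 < p) {f : V → ℝ} (hf : ∀ x ∉ Ω, f x = 0) {x : V} (hx : x ∈ Ω) (hfx : f x ≠ 0)
    (hlt : w0NormSq nbr w mu Ω f < ∑ y ∈ Ω, mu y * |f y| ^ (p + 1)) :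
    ∃ v, nehariOmega nbr w mu Ω p v ∧ w0NormSq nbr w mu Ω v < w0NormSq nbr w mu Ω f := by
  have hW := w0NormSq_pos hw hmu hx hfx
  have hP := hW.trans hlt
  refine ⟨_, nehariOmega_rpow_smul hp hf (fun h => hfx (congrFun h x)) hW hP, ?_⟩
  have ht := Real.rpow_lt_one (div_pos hW hP).le ((div_lt_one hP).2 hlt)
    (inv_pos.2 (by linarith : 0 < p - 1))
  rw [w0NormSq_smul]
  exact mul_lt_of_lt_one_left hW
    (pow_lt_one₀ (Real.rpow_nonneg (div_pos hW hP).le _) ht two_ne_zero)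

lemma w0NormSq_eq_of_forall_le (hw : ∀ x y, y ∈ nbr x → 0 ≤ w x y) (hmu : ∀ x, 0 < mu x)
    (hp : 1 < p) {f : V → ℝ} (hf : ∀ x ∉ Ω, f x = 0) {x : V} (hx : x ∈ Ω) (hfx : f x ≠ 0)
    (hle : w0NormSq nbr w mu Ω f ≤ ∑ y ∈ Ω, mu y * |f y| ^ (p + 1))
    (hmin : ∀ v, nehariOmega nbr w mu Ω p v →
      ∑ y ∈ Ω, mu y * |f y| ^ (p + 1) ≤ w0NormSq nbr w mu Ω v) :
    w0NormSq nbr w mu Ω f = ∑ y ∈ Ω, mu y * |f y| ^ (p + 1) :=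
  hle.eq_of_not_lt fun hlt => by
    obtain ⟨v, hv, hvf⟩ := exists_nehariOmega_w0NormSq_lt hw hmu hp hf hx hfx hlt
    linarith [hmin v hv]

end

section

variable {V : Type*} [DecidableEq V] {nbr : V → Finset V} {w : V → V → ℝ} {mu a : V → ℝ}
  {Ω : Finset V} {p : ℝ} {lam : ℕ → ℝ} {u : ℕ → V → ℝ} {u₀ : V → ℝ}

lemma tendsto_tsum_w12Density_of_le {c : ℕ → ℝ} (hsym : ∀ x y, y ∈ nbr x ↔ x ∈ nbr y)
    (hw : ∀ x y, y ∈ nbr x → 0 ≤ w x y) (hmu : ∀ x, 0 ≤ mu x) (hsupp : ∀ x ∉ Ω, u₀ x = 0)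
    (hconv : Tendsto u atTop (𝓝 u₀)) (hs : ∀ k, Summable (w12Density nbr w mu (u k)))
    (hle : ∀ k, ∑' x, w12Density nbr w mu (u k) x ≤ c k)
    (hc : Tendsto c atTop (𝓝 (∑' x, w12Density nbr w mu u₀ x))) :
    Tendsto (fun k => ∑' x, w12Density nbr w mu (u k) x) atTop
      (𝓝 (∑' x, w12Density nbr w mu u₀ x)) := by
  have hlow : Tendsto (fun k => ∑ x ∈ Ω ∪ Ω.biUnion nbr, w12Density nbr w mu (u k) x) atTop
      (𝓝 (∑' x, w12Density nbr w mu u₀ x)) := by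
    rw [tsum_eq_sum fun x => w12Density_eq_zero_of_notMem hsym hsupp]
    exact tendsto_finsetSum _ fun x _ => tendsto_w12Density hconv x
  exact tendsto_of_tendsto_of_tendsto_of_le_of_le hlow hc
    (fun k => Summable.sum_le_tsum _ (fun x _ => w12Density_nonneg hw hmu _ x) (hs k)) hle

lemma tendsto_tsum_w12Density_sub (hsym : ∀ x y, y ∈ nbr x ↔ x ∈ nbr y)
    (hsupp : ∀ x ∉ Ω, u₀ x = 0) (hs : ∀ k, Summable (w12Density nbr w mu (u k)))
    (hconv : Tendsto u atTop (𝓝 u₀))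
    (hnorm : Tendsto (fun k => ∑' x, w12Density nbr w mu (u k) x) atTop
      (𝓝 (∑' x, w12Density nbr w mu u₀ x))) :
    Tendsto (fun k => ∑' x, w12Density nbr w mu (u k - u₀) x) atTop (𝓝 0) := by
  set F := Ω ∪ Ω.biUnion nbr
  have hoff : ∀ k, ∀ x ∉ F, w12Density nbr w mu (u k - u₀) x = w12Density nbr w mu (u k) x :=
    fun k x hx => by
      rw [w12Density, w12Density, graphGamma_sub_self_of_notMem hsym _ hsupp hx, Pi.sub_apply,
        hsupp x fun h => hx (Finset.mem_union_left _ h), sub_zero]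
  have hlim : Tendsto (fun k => ∑ x ∈ F, (w12Density nbr w mu (u k - u₀) x
      - w12Density nbr w mu (u k) x)) atTop
      (𝓝 (∑ x ∈ F, (w12Density nbr w mu (u₀ - u₀) x - w12Density nbr w mu u₀ x))) :=
    tendsto_finsetSum F fun x _ =>
      (tendsto_w12Density (hconv.sub_const u₀) x).sub (tendsto_w12Density hconv x)
  rw [tsum_eq_sum fun x => w12Density_eq_zero_of_notMem hsym hsupp] at hnorm
  convert (hnorm.add hlim).congr fun k => (tsum_eq_tsum_add_sum_sub F (hs k) (hoff k)).symm using 2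
  simp [w12Density_zero, F]

/-- The energy-loss argument: `‖u₀‖² < ∫ |u₀|^{p+1}` would put a rescaling of `u₀` into `N_Ω`
strictly below the limit level. -/
lemma nehariOmega_of_tendsto (hsym : ∀ x y, y ∈ nbr x ↔ x ∈ nbr y)
    (hw : ∀ x y, y ∈ nbr x → 0 ≤ w x y) (hmu : ∀ x, 0 < mu x) (ha : ∀ x, 0 ≤ a x)
    (hp : 1 < p) {δ : ℝ} (hδ : 0 < δ) (hlam : ∀ k, 0 < lam k)
    (hneh : ∀ k, nehari nbr w mu a (lam k) p (u k))
    (hδE : ∀ k, δ ≤ eNormSq nbr w mu a (lam k) (u k))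
    (hlevel : ∀ k v, nehariOmega nbr w mu Ω p v →
      eNormSq nbr w mu a (lam k) (u k) ≤ w0NormSq nbr w mu Ω v)
    (hsupp : ∀ x ∉ Ω, u₀ x = 0) (hconv : Tendsto u atTop (𝓝 u₀))
    (hP : Tendsto (fun k => pNorm mu p (u k)) atTop (𝓝 (pNorm mu p u₀))) :
    nehariOmega nbr w mu Ω p u₀ ∧
      (∀ v, nehariOmega nbr w mu Ω p v → w0NormSq nbr w mu Ω u₀ ≤ w0NormSq nbr w mu Ω v) ∧
      Tendsto (fun k => ∑' x, w12Density nbr w mu (u k) x) atTop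
        (𝓝 (∑' x, w12Density nbr w mu u₀ x)) ∧
      Tendsto (fun k => lam k * ∑' x, mu x * (a x * u k x ^ 2)) atTop (𝓝 0) := by
  have hmu0 : ∀ x, 0 ≤ mu x := fun x => (hmu x).le
  have hs : ∀ k, Summable (w12Density nbr w mu (u k)) := fun k =>
    summable_w12Density hw hmu0 ha (hlam k).le (hneh k).2.1.1
  have hdec := fun k => eNormSq_eq_tsum_add hw hmu0 ha (hlam k).le (hneh k).2.1.1
  have hQE : ∀ k, ∑' x, w12Density nbr w mu (u k) x ≤ eNormSq nbr w mu a (lam k) (u k) :=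
    fun k => (hdec k).symm ▸ le_add_of_nonneg_right (mul_nonneg (hlam k).le
      (tsum_nonneg fun x => mul_nonneg (hmu0 x) (mul_nonneg (ha x) (sq_nonneg _))))
  have hE : Tendsto (fun k => eNormSq nbr w mu a (lam k) (u k)) atTop
      (𝓝 (∑ x ∈ Ω, mu x * |u₀ x| ^ (p + 1))) := by
    rw [← pNorm_eq_sum (by linarith) hsupp]
    exact hP.congr fun k => ((hneh k).2.2).symm
  have hW := w0NormSq_eq_tsum_w12Density (w := w) (mu := mu) hsym hsupp
  have hmin : ∀ v, nehariOmega nbr w mu Ω p v →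
      ∑ x ∈ Ω, mu x * |u₀ x| ^ (p + 1) ≤ w0NormSq nbr w mu Ω v :=
    fun v hv => le_of_tendsto' hE fun k => hlevel k v hv
  obtain ⟨x, hx⟩ : ∃ x, u₀ x ≠ 0 := by
    by_contra! h0
    have h := ge_of_tendsto' hE hδE
    simp [h0, Real.zero_rpow (by linarith : p + 1 ≠ 0)] at h
    linarith
  have hxΩ : x ∈ Ω := by
    by_contra h
    exact hx (hsupp x h)
  have heq := w0NormSq_eq_of_forall_le hw hmu hp hsupp hxΩ hx
    (hW ▸ tsum_w12Density_le_of_tendsto hw hmu0 hconv hs hQE hE) hmin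
  have hQ := tendsto_tsum_w12Density_of_le hsym hw hmu0 hsupp hconv hs hQE (by rwa [← hW, heq])
  refine ⟨⟨fun h => hx (congrFun h x), hsupp, heq⟩, fun v hv => heq ▸ hmin v hv, hQ, ?_⟩
  have hA := hE.sub hQ
  rw [← hW, heq, sub_self] at hA
  exact hA.congr fun k => by rw [hdec k]; ring

end

theorem ground_state_convergence_general {V : Type*} [DecidableEq V]
    (nbr : V → Finset V) (w : V → V → ℝ) (mu a : V → ℝ)
    (hsym : ∀ x y, y ∈ nbr x ↔ x ∈ nbr y)
    (hwpos : ∀ x y, y ∈ nbr x → 0 < w x y)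
    (mumin : ℝ) (hmin : 0 < mumin) (hmu : ∀ x, mumin ≤ mu x)
    (p : ℝ) (hp : 2 ≤ p)
    (ha0 : ∀ x, 0 ≤ a x)
    (Ω : Finset V) (hΩ : ∀ x, x ∈ Ω ↔ a x = 0) (hΩne : Ω.Nonempty)
    (d : V → ℕ)
    (hballs : ∀ R : ℕ, {x : V | d x ≤ R}.Finite)
    (hainf : ∀ C : ℝ, ∃ R : ℕ, ∀ x, R < d x → C ≤ a x)
    (lam : ℕ → ℝ) (hlam1 : ∀ k, 1 < lam k) (hlam : Tendsto lam atTop atTop)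
    (u : ℕ → V → ℝ)
    (hneh : ∀ k, nehari nbr w mu a (lam k) p (u k))
    (hground : ∀ k, ∀ v : V → ℝ, nehari nbr w mu a (lam k) p v →
      Jfun nbr w mu a (lam k) p (u k) ≤ Jfun nbr w mu a (lam k) p v) :
    ∃ (φ : ℕ → ℕ) (u₀ : V → ℝ), StrictMono φ ∧
      (∀ x, x ∉ Ω → u₀ x = 0) ∧
      Tendsto (fun k => ∑' x, mu x *
          (graphGamma nbr w mu (u (φ k) - u₀) (u (φ k) - u₀) x
            + (u (φ k) x - u₀ x) ^ 2)) atTop (𝓝 0) ∧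
      nehariOmega nbr w mu Ω p u₀ ∧
      (∀ v : V → ℝ, nehariOmega nbr w mu Ω p v →
        JOmega nbr w mu Ω p u₀ ≤ JOmega nbr w mu Ω p v) ∧
      Tendsto (fun k => lam (φ k) * ∑' x, mu x * (a x * u (φ k) x ^ 2))
        atTop (𝓝 0) ∧
      Tendsto (fun k => ∑' x, mu x * graphGamma nbr w mu (u (φ k)) (u (φ k)) x)
        atTop (𝓝 (∑' x, mu x * graphGamma nbr w mu u₀ u₀ x)) := by
  have hp1 : 1 < p := by linarith
  have hmupos : ∀ x, 0 < mu x := fun x => hmin.trans_le (hmu x)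
  have hmu0 : ∀ x, 0 ≤ mu x := fun x => (hmupos x).le
  have hw : ∀ x y, y ∈ nbr x → 0 ≤ w x y := fun x y h => (hwpos x y h).le
  have hlam0 : ∀ k, 0 < lam k := fun k => one_pos.trans (hlam1 k)
  have hlevel : ∀ k v, nehariOmega nbr w mu Ω p v →
      eNormSq nbr w mu a (lam k) (u k) ≤ w0NormSq nbr w mu Ω v := fun k v hv =>
    eNormSq_le_w0NormSq hsym (fun x => (hΩ x).1) hp1 (hneh k) (hground k) hv
  obtain ⟨v₁, hv₁⟩ := exists_nehariOmega hw hmupos hp1 hΩne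
  have hb : ∀ k x, |u k x| ≤ √(w0NormSq nbr w mu Ω v₁ / mumin) := fun k =>
    abs_le_sqrt_of_eNormSq_le hw hmin hmu ha0 (hlam0 k).le (hneh k).2.1.1 (hlevel k v₁ hv₁)
  have := countable_of_finite_setOf_le d hballs
  obtain ⟨φ, u₀, hφ, hconv⟩ := exists_strictMono_tendsto_of_abs_le hb
  have hlamφ : Tendsto (fun k => lam (φ k)) atTop atTop := hlam.comp hφ.tendsto_atTop
  have hsuppa : ∀ x, 0 < a x → u₀ x = 0 := apply_eq_zero_of_tendsto hw hmupos ha0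
    (fun k => hlam0 (φ k)) hlamφ (fun k => (hneh (φ k)).2.1.1) (fun k => hlevel (φ k) v₁ hv₁) hconv
  have hsupp : ∀ x ∉ Ω, u₀ x = 0 := fun x hx =>
    hsuppa x ((ha0 x).lt_of_ne fun h => hx ((hΩ x).2 h.symm))
  obtain ⟨hT, hP⟩ := tendsto_tsum_sq_and_pNorm d hw hmu0 ha0 hballs hainf hp1.le
    (fun k => hlam0 (φ k)) hlamφ (fun k => (hneh (φ k)).2.1) (fun k => hlevel (φ k) v₁ hv₁)
    (fun k => hb (φ k)) hconv hsuppa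
  obtain ⟨hN, hNmin, hQ, hA⟩ := nehariOmega_of_tendsto hsym hw hmupos ha0 hp1 hmin
    (fun k => hlam0 (φ k)) (fun k => hneh (φ k))
    (fun k => le_eNormSq_of_nehari hw hmin hmu ha0 (hlam0 _).le hp1 (hneh (φ k)))
    (fun k => hlevel (φ k)) hsupp hconv hP
  have hs : ∀ k, Summable (w12Density nbr w mu (u (φ k))) := fun k =>
    summable_w12Density hw hmu0 ha0 (hlam0 _).le (hneh (φ k)).2.1.1
  exact ⟨φ, u₀, hφ, hsupp, tendsto_tsum_w12Density_sub hsym hsupp hs hconv hQ, hN,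
    fun v hv => JOmega_le_of_w0NormSq_le hp1 hN hv (hNmin v hv), hA,
    tendsto_tsum_mu_mul_graphGamma hw hmu0 hs
      (summable_of_ne_finset_zero fun x => w12Density_eq_zero_of_notMem hsym hsupp) hQ hT⟩

/-- Main convergence theorem: as λ_k → ∞, up to a subsequence, the ground
states u_{λ_k} converge strongly in W^{1,2}(V) to a ground state u₀ of the
Dirichlet problem on the potential well Ω = {a = 0}; moreover
λ_k∫a u_{λ_k}²dμ → 0 and ∫|∇u_{λ_k}|²dμ → ∫|∇u₀|²dμ. -/
theorem ground_state_convergence {V : Type*} [DecidableEq V]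
    (nbr : V → Finset V) (w : V → V → ℝ) (mu a : V → ℝ)
    (hsym : ∀ x y, y ∈ nbr x ↔ x ∈ nbr y)
    (hconn : ∀ x y : V, Relation.ReflTransGen (fun s t => t ∈ nbr s) x y)
    (hwpos : ∀ x y, y ∈ nbr x → 0 < w x y)
    (hwsym : ∀ x y, w x y = w y x)
    (mumin : ℝ) (hmin : 0 < mumin) (hmu : ∀ x, mumin ≤ mu x)
    (p : ℝ) (hp : 2 ≤ p)
    (ha0 : ∀ x, 0 ≤ a x)
    (Ω : Finset V) (hΩ : ∀ x, x ∈ Ω ↔ a x = 0) (hΩne : Ω.Nonempty)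
    (hΩconn : ∀ x ∈ Ω, ∀ y ∈ Ω,
      Relation.ReflTransGen (fun s t => t ∈ nbr s ∧ s ∈ Ω ∧ t ∈ Ω) x y)
    (xb : V) (d : V → ℕ)
    (hballs : ∀ R : ℕ, {x : V | d x ≤ R}.Finite)
    (hainf : ∀ C : ℝ, ∃ R : ℕ, ∀ x, R < d x → C ≤ a x)
    (lam : ℕ → ℝ) (hlam1 : ∀ k, 1 < lam k) (hlam : Tendsto lam atTop atTop)
    (u : ℕ → V → ℝ)
    (hneh : ∀ k, nehari nbr w mu a (lam k) p (u k))
    (hground : ∀ k, ∀ v : V → ℝ, nehari nbr w mu a (lam k) p v →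
      Jfun nbr w mu a (lam k) p (u k) ≤ Jfun nbr w mu a (lam k) p v) :
    ∃ (φ : ℕ → ℕ) (u₀ : V → ℝ), StrictMono φ ∧
      (∀ x, x ∉ Ω → u₀ x = 0) ∧
      Tendsto (fun k => ∑' x, mu x *
          (graphGamma nbr w mu (u (φ k) - u₀) (u (φ k) - u₀) x
            + (u (φ k) x - u₀ x) ^ 2)) atTop (𝓝 0) ∧
      nehariOmega nbr w mu Ω p u₀ ∧
      (∀ v : V → ℝ, nehariOmega nbr w mu Ω p v →
        JOmega nbr w mu Ω p u₀ ≤ JOmega nbr w mu Ω p v) ∧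
      Tendsto (fun k => lam (φ k) * ∑' x, mu x * (a x * u (φ k) x ^ 2))
        atTop (𝓝 0) ∧
      Tendsto (fun k => ∑' x, mu x * graphGamma nbr w mu (u (φ k)) (u (φ k)) x)
        atTop (𝓝 (∑' x, mu x * graphGamma nbr w mu u₀ u₀ x)) :=
  ground_state_convergence_general nbr w mu a hsym hwpos mumin hmin hmu p hp ha0 Ω hΩ hΩne d hballs
    hainf lam hlam1 hlam u hneh hground
end
end
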